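/- arXiv:math/9803103 — 4 statements merged into one kernel-verified Lean document; each statement's English description precedes it below -/
import Mathlib

section
/- Let n = r·s with r, s > 1. Identify Fin n with Fin s × Fin r and embed U = S_r into S_n by letting a permutation of Fin r act simultaneously on the second coordinate of each of the s blocks. Then the restriction of the ℤ[S_n]-module M_n to U decomposes as a ℤ[S_r]-module into a direct sum M_n|_U ≅ M_r ⊕ (Fin r → ℤ)^{⊕(s−1)}, i.e. a copy of M_r plus (s−1) copies of the natural permutation module of S_r on Fin r. -/
/-! Preliminaries: a lightweight theory of `G`-modules (abelian groups with a
distributive `G`-action, i.e. `ℤ[G]`-modules), lattices, permutation modules,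
flasque modules and flasque resolutions, the norm-one-torus character lattice
`Mn n` over the symmetric group `S_n`, and low-degree group cohomology with
the invariant `Ш²_ω`. -/

open Equiv

universe u

/-- A `G`-module: an additive commutative group with a distributive `G`-action
(equivalently, a `ℤ[G]`-module). -/
structure GMod (G : Type u) [Group G] : Type (u + 1) where
  carrier : Type u
  [isAddCommGroup : AddCommGroup carrier]
  [isDistribMulAction : DistribMulAction G carrier]

attribute [instance] GMod.isAddCommGroup GMod.isDistribMulAction

namespace GMod

variable {G : Type u} [Group G]

instance : CoeSort (GMod G) (Type u) := ⟨GMod.carrier⟩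

/-- A morphism of `G`-modules is an additive map commuting with the `G`-action. -/
def IsEquivariant {M N : GMod G} (f : M →+ N) : Prop :=
  ∀ (g : G) (m : M), f (g • m) = g • f m

/-- Two `G`-modules are isomorphic if there is an equivariant additive equivalence. -/
def Iso (M N : GMod G) : Prop :=
  ∃ e : M ≃+ N, ∀ (g : G) (m : M), e (g • m) = g • e m

/-- Restriction of a `G`-module along a group homomorphism `φ : H →* G`. -/
def res (M : GMod G) {H : Type u} [Group H] (φ : H →* G) : GMod H where
  carrier := M
  isDistribMulAction :=
    { smul := fun h m => φ h • m
      one_smul := fun m => by show φ 1 • m = m; simp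
      mul_smul := fun a b m => by
        show φ (a * b) • m = φ a • (φ b • m)
        rw [map_mul, mul_smul]
      smul_zero := fun a => by show φ a • (0 : M.carrier) = 0; simp
      smul_add := fun a x y => by
        show φ a • (x + y) = φ a • x + φ a • y
        simp [smul_add] }

/-- The direct sum of two `G`-modules. -/
def prod (M N : GMod G) : GMod G where
  carrier := M × N

/-- The direct sum of `k` copies of a `G`-module. -/
def copies (k : ℕ) (M : GMod G) : GMod G where
  carrier := Fin k → M

/-- A trivial `G`-module. -/
def triv (G : Type u) [Group G] (A : Type u) [AddCommGroup A] : GMod G where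
  carrier := A
  isDistribMulAction :=
    { smul := fun _ a => a
      one_smul := fun _ => rfl
      mul_smul := fun _ _ _ => rfl
      smul_zero := fun _ => rfl
      smul_add := fun _ _ _ => rfl }

/-- The permutation `G`-module `ℤ[X]` attached to an action `φ : G →* Perm X`,
realized as functions `X → ℤ` with `(g • f) x = f ((φ g)⁻¹ x)`. -/
def permMod {X : Type u} (φ : G →* Equiv.Perm X) : GMod G where
  carrier := X → ℤ
  isDistribMulAction :=
    { smul := fun g f => fun x => f ((φ g)⁻¹ x)
      one_smul := fun f => by funext x; show f ((φ 1)⁻¹ x) = f x; simp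
      mul_smul := fun g h f => by
        funext x
        show f ((φ (g * h))⁻¹ x) = f ((φ h)⁻¹ ((φ g)⁻¹ x))
        rw [map_mul, mul_inv_rev, Equiv.Perm.mul_apply]
      smul_zero := fun g => rfl
      smul_add := fun g a b => rfl }

/-- The subgroup of `X → ℤ` generated by the all-ones vector (for `X = G` this
is `ℤ · N_G`, the span of the norm element of the group algebra). -/
def normSub (X : Type u) : AddSubgroup (X → ℤ) :=
  AddSubgroup.zmultiples (fun _ => (1 : ℤ))

/-- The additive endomorphism of `X → ℤ` induced by a permutation of `X`. -/
def permHomAdd {X : Type u} (σ : Equiv.Perm X) : (X → ℤ) →+ (X → ℤ) where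
  toFun f := fun x => f (σ⁻¹ x)
  map_zero' := rfl
  map_add' _ _ := rfl

theorem normSub_le_comap {X : Type u} (σ : Equiv.Perm X) :
    normSub X ≤ (normSub X).comap (permHomAdd σ) := by
  intro f hf
  rcases AddSubgroup.mem_zmultiples_iff.mp hf with ⟨k, rfl⟩
  exact AddSubgroup.mem_zmultiples_iff.mpr ⟨k, by funext x; simp [permHomAdd]⟩

/-- The quotient of the permutation module `ℤ[X]` by the span of the all-ones
vector, as a `G`-module.  For `X = Fin n` with the tautological action of
`S_n` this is the lattice `M_n`; for `X = G` with the regular action this is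
`ℤ[G]/ℤ·N_G`. -/
def permModQuot {X : Type u} (φ : G →* Equiv.Perm X) : GMod G where
  carrier := (X → ℤ) ⧸ normSub X
  isDistribMulAction :=
    { smul := fun g q =>
        QuotientAddGroup.map _ _ (permHomAdd (φ g)) (normSub_le_comap (φ g)) q
      one_smul := fun q => QuotientAddGroup.induction_on q (fun f => by
        show QuotientAddGroup.map _ _ (permHomAdd (φ 1)) _ (QuotientAddGroup.mk f)
            = QuotientAddGroup.mk f
        rw [QuotientAddGroup.map_mk]
        congr 1
        funext x
        simp [permHomAdd])
      mul_smul := fun g h q => QuotientAddGroup.induction_on q (fun f => by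
        show QuotientAddGroup.map _ _ (permHomAdd (φ (g * h))) _ (QuotientAddGroup.mk f)
            = QuotientAddGroup.map _ _ (permHomAdd (φ g)) _
              (QuotientAddGroup.map _ _ (permHomAdd (φ h)) _ (QuotientAddGroup.mk f))
        rw [QuotientAddGroup.map_mk, QuotientAddGroup.map_mk, QuotientAddGroup.map_mk]
        congr 1
        funext x
        simp [permHomAdd, map_mul, mul_inv_rev, Equiv.Perm.mul_apply])
      smul_zero := fun g => map_zero _
      smul_add := fun g a b => map_add _ a b }

/-- The character lattice `M_n = ℤ[S_n/S_{n-1}] / ℤ·(1,…,1)` of the norm-one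
torus of a degree-`n` generic extension: the quotient of `Fin n → ℤ` (with the
coordinate-permuting action of `S_n`) by the span of the all-ones vector. -/
def Mn (n : ℕ) : GMod (Equiv.Perm (Fin n)) :=
  permModQuot (MonoidHom.id (Equiv.Perm (Fin n)))

/-- The natural permutation module `Fin n → ℤ` of `S_n`. -/
def stdMod (n : ℕ) : GMod (Equiv.Perm (Fin n)) :=
  permMod (MonoidHom.id (Equiv.Perm (Fin n)))

/-- The regular `G`-module `ℤ[G]`, realized as functions `G → ℤ`. -/
def regular (G : Type u) [Group G] : GMod G :=
  permMod (MulAction.toPermHom G G)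

/-- The quotient `ℤ[G]/ℤ·N_G` of the regular module by the span of the norm
element `N_G = Σ_{g ∈ G} g`. -/
def regModNorm (G : Type u) [Group G] : GMod G :=
  permModQuot (MulAction.toPermHom G G)

/-- A `G`-lattice: a `G`-module that is finitely generated and free over `ℤ`. -/
def IsLattice (M : GMod G) : Prop :=
  Module.Free ℤ M ∧ Module.Finite ℤ M

/-- A permutation `G`-lattice: one admitting a finite `ℤ`-basis permuted by `G`. -/
def IsPermutation (M : GMod G) : Prop :=
  ∃ (ι : Type u) (_ : Finite ι) (b : Module.Basis ι ℤ M) (f : G →* Equiv.Perm ι),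
    ∀ (g : G) (i : ι), g • b i = b (f g i)

/-- A stably permutation `G`-module: `N ⊕ P ≅ Q` for permutation modules `P, Q`. -/
def IsStablyPermutation (N : GMod G) : Prop :=
  ∃ P Q : GMod G, P.IsPermutation ∧ Q.IsPermutation ∧ Iso (N.prod P) Q

/-- A flasque `G`-module: `Ĥ⁻¹(G', N) = 0` for every subgroup `G' ≤ G`, i.e.
every `x` killed by the norm of `G'` is a sum of elements `g • y - y`. -/
def IsFlasque [Finite G] (N : GMod G) : Prop :=
  ∀ (H : Subgroup G) (x : N),
    (∑ g ∈ (Set.toFinite (H : Set G)).toFinset, g • x) = 0 →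
      x ∈ AddSubgroup.closure {z : N.carrier | ∃ g ∈ H, ∃ y : N.carrier, z = g • y - y}

/-- A flasque resolution `0 → M → S → N → 0`: a short exact sequence of
`G`-lattices with `S` a permutation module and `N` flasque. -/
def IsFlasqueResolution [Finite G] (M S N : GMod G) : Prop :=
  M.IsLattice ∧ S.IsLattice ∧ N.IsLattice ∧ S.IsPermutation ∧ N.IsFlasque ∧
    ∃ (i : M →+ S) (p : S →+ N),
      IsEquivariant i ∧ IsEquivariant p ∧
        Function.Injective i ∧ Function.Surjective p ∧ i.range = p.ker

/-! ### Low-degree group cohomology via inhomogeneous cocycles. -/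

/-- Inhomogeneous 2-cocycles of `G` with values in `M`. -/
def twoCocycles (M : GMod G) : AddSubgroup (G → G → M.carrier) where
  carrier := {f | ∀ g h k : G, g • f h k + f g (h * k) = f (g * h) k + f g h}
  zero_mem' := by intro g h k; simp
  add_mem' := by
    intro a b ha hb g h k
    simp only [Pi.add_apply, smul_add]
    rw [add_add_add_comm, ha g h k, hb g h k, add_add_add_comm]
  neg_mem' := by
    intro a ha g h k
    simp only [Pi.neg_apply, smul_neg, ← neg_add, ha g h k]

/-- The differential sending a 1-cochain to a 2-coboundary. -/
def dOne (M : GMod G) : (G → M.carrier) →+ (G → G → M.carrier) where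
  toFun c := fun g h => g • c h - c (g * h) + c g
  map_zero' := by funext g h; simp
  map_add' a b := by
    funext g h
    simp only [Pi.add_apply, smul_add]
    abel

/-- `H²(G, M)`: 2-cocycles modulo 2-coboundaries. -/
def H2 (M : GMod G) : Type u :=
  twoCocycles M ⧸ ((dOne M).range.addSubgroupOf (twoCocycles M))

instance (M : GMod G) : AddCommGroup (H2 M) :=
  inferInstanceAs (AddCommGroup (_ ⧸ _))

/-- 1-cocycles (crossed homomorphisms) of `G` with values in `M`. -/
def oneCocycles (M : GMod G) : AddSubgroup (G → M.carrier) where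
  carrier := {f | ∀ g h : G, f (g * h) = g • f h + f g}
  zero_mem' := by intro g h; simp
  add_mem' := by
    intro a b ha hb g h
    simp only [Pi.add_apply, smul_add, ha g h, hb g h]
    abel
  neg_mem' := by
    intro a ha g h
    simp only [Pi.neg_apply, smul_neg, ha g h]
    abel

/-- The differential sending a 0-cochain to a 1-coboundary. -/
def dZero (M : GMod G) : M.carrier →+ (G → M.carrier) where
  toFun m := fun g => g • m - m
  map_zero' := by funext g; simp
  map_add' a b := by
    funext g
    simp only [Pi.add_apply, smul_add]
    abel

/-- `H¹(G, M)`: 1-cocycles modulo 1-coboundaries. -/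
def H1 (M : GMod G) : Type u :=
  oneCocycles M ⧸ ((dZero M).range.addSubgroupOf (oneCocycles M))

instance (M : GMod G) : AddCommGroup (H1 M) :=
  inferInstanceAs (AddCommGroup (_ ⧸ _))

/-- Restriction of 2-cocycles along a group homomorphism `φ : H →* G`. -/
def resTwoCocycles (M : GMod G) {H : Type u} [Group H] (φ : H →* G) :
    twoCocycles M →+ twoCocycles (M.res φ) where
  toFun f := ⟨fun a b => f.1 (φ a) (φ b), by
    intro a b c
    show φ a • f.1 (φ b) (φ c) + f.1 (φ a) (φ (b * c))
        = f.1 (φ (a * b)) (φ c) + f.1 (φ a) (φ b)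
    rw [map_mul, map_mul]
    exact f.2 (φ a) (φ b) (φ c)⟩
  map_zero' := rfl
  map_add' _ _ := rfl

theorem coboundaries_le_comap_resTwoCocycles (M : GMod G) {H : Type u} [Group H]
    (φ : H →* G) :
    ((dOne M).range.addSubgroupOf (twoCocycles M)) ≤
      (((dOne (M.res φ)).range.addSubgroupOf (twoCocycles (M.res φ))).comap
        (resTwoCocycles M φ)) := by
  intro f hf
  rcases hf with ⟨c, hc⟩
  refine ⟨fun h => c (φ h), ?_⟩
  have hc' : ∀ g h : G, g • c h - c (g * h) + c g = f.1 g h := fun g h =>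
    congrFun (congrFun hc g) h
  funext a b
  show φ a • c (φ b) - c (φ (a * b)) + c (φ a) = f.1 (φ a) (φ b)
  rw [map_mul]
  exact hc' (φ a) (φ b)

/-- The restriction map `H²(G, M) → H²(H, M)` along `φ : H →* G`. -/
def resH2 (M : GMod G) {H : Type u} [Group H] (φ : H →* G) :
    H2 M →+ H2 (M.res φ) :=
  QuotientAddGroup.map _ _ (resTwoCocycles M φ)
    (coboundaries_le_comap_resTwoCocycles M φ)

/-- `Ш²_ω(G, M)`: the subgroup of `H²(G, M)` of classes whose restriction to
every cyclic subgroup `⟨g⟩ ≤ G` vanishes. -/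
def Sha2omega (M : GMod G) : AddSubgroup (H2 M) :=
  ⨅ g : G, (resH2 M ((Subgroup.zpowers g).subtype)).ker

end GMod

open GMod

/-- The identification of `Fin s × Fin r` (s blocks of size r) with `Fin (r·s)`. -/
def blockEquiv (r s : ℕ) : Fin s × Fin r ≃ Fin (r * s) :=
  finProdFinEquiv.trans (finCongr (Nat.mul_comm s r))

/-- The embedding `S_r ↪ S_{r·s}` letting a permutation of `Fin r` act
simultaneously on the second coordinate of each of the `s` blocks. -/
def embedHom (r s : ℕ) : Equiv.Perm (Fin r) →* Equiv.Perm (Fin (r * s)) where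
  toFun π := (blockEquiv r s).permCongr ((Equiv.refl (Fin s)).prodCongr π)
  map_one' := by ext x; simp [Equiv.permCongr_apply]
  map_mul' a b := by
    ext x
    simp [Equiv.permCongr_apply, Equiv.Perm.mul_apply, Prod.map_map]

/-! Split `Fin (r·s)` into `s` blocks, each a copy of the `S_r`-set `Fin r`. In the coordinates
`f ↦ (f on block 0, (f on block i) - (f on block 0) for i ≥ 1)` of `ℤ[Fin (r·s)]` the action of `S_r`
is blockwise and the all-ones vector becomes `((1,…,1), 0)`, so quotienting by it amounts to
passing to `ℤ[Fin r]/ℤ` in the first coordinate: `M_{rs}|_{S_r} ≅ M_r ⊕ ℤ[Fin r]^{s-1}`. -/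

namespace GMod

variable {G : Type u} [Group G]

theorem mem_normSub_iff {X : Type u} {f : X → ℤ} : f ∈ normSub X ↔ ∃ c : ℤ, f = fun _ => c := by
  simp only [normSub, AddSubgroup.mem_zmultiples_iff, funext_iff, Pi.smul_apply, smul_eq_mul,
    mul_one, eq_comm]

theorem iso_permModQuot_of_surjective {X : Type u} (φ : G →* Equiv.Perm X) {N : GMod G}
    (F : (X → ℤ) →+ N) (hF : ∀ (g : G) (f : X → ℤ), F (permHomAdd (φ g) f) = g • F f)
    (hsurj : Function.Surjective F) (hker : F.ker = normSub X) :
    Iso (permModQuot φ) N := by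
  refine ⟨(QuotientAddGroup.quotientAddEquivOfEq hker.symm).trans
    (QuotientAddGroup.quotientKerEquivOfSurjective F hsurj), fun g q => ?_⟩
  induction q using QuotientAddGroup.induction_on with
  | H f => exact hF g f

end GMod

section BlockDecomposition

open GMod

variable {G X Y : Type u} [Group G] (k : ℕ) (e : Fin (k + 1) × X ≃ Y)

def blockCoords : (Y → ℤ) ≃+ (X → ℤ) × (Fin k → X → ℤ) where
  toFun f := (fun x => f (e (0, x)), fun j x => f (e (j.succ, x)) - f (e (0, x)))
  invFun p y := p.1 (e.symm y).2 + Matrix.vecCons 0 p.2 (e.symm y).1 (e.symm y).2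
  left_inv f := by
    funext y
    obtain ⟨⟨i, x⟩, rfl⟩ := e.surjective y
    cases i using Fin.cases <;> simp
  right_inv p := by
    ext <;> simp
  map_add' f g := by
    ext <;> simp only [Pi.add_apply, Prod.fst_add, Prod.snd_add]
    ring

theorem blockCoords_const (c : ℤ) : blockCoords k e (fun _ => c) = (fun _ => c, 0) := by
  ext <;> simp [blockCoords]

theorem blockCoords_permHomAdd {φ : G →* Equiv.Perm X} {ψ : G →* Equiv.Perm Y}
    (he : ∀ (g : G) (i : Fin (k + 1)) (x : X), ψ g (e (i, x)) = e (i, φ g x))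
    (g : G) (f : Y → ℤ) :
    blockCoords k e (permHomAdd (ψ g) f) =
      (permHomAdd (φ g) (blockCoords k e f).1,
        fun j => permHomAdd (φ g) ((blockCoords k e f).2 j)) := by
  have he_symm (i : Fin (k + 1)) (x : X) : (ψ g).symm (e (i, x)) = e (i, (φ g).symm x) := by
    rw [Equiv.symm_apply_eq, he, Equiv.apply_symm_apply]
  ext <;> simp [blockCoords, permHomAdd, he_symm]

def blockQuot : (Y → ℤ) →+ ((X → ℤ) ⧸ normSub X) × (Fin k → X → ℤ) :=
  ((QuotientAddGroup.mk' (normSub X)).prodMap (AddMonoidHom.id _)).comp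
    (blockCoords k e).toAddMonoidHom

theorem blockQuot_surjective : Function.Surjective (blockQuot k e) :=
  (Function.Surjective.prodMap (QuotientAddGroup.mk'_surjective _) Function.surjective_id).comp
    (blockCoords k e).surjective

theorem blockQuot_apply (f : Y → ℤ) :
    blockQuot k e f = (QuotientAddGroup.mk (blockCoords k e f).1, (blockCoords k e f).2) :=
  rfl

theorem ker_blockQuot : (blockQuot k e).ker = normSub Y := by
  ext f
  rw [AddMonoidHom.mem_ker, blockQuot_apply, Prod.mk_eq_zero, QuotientAddGroup.eq_zero_iff,
    mem_normSub_iff, mem_normSub_iff]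
  constructor
  · rintro ⟨⟨c, hc⟩, h0⟩
    refine ⟨c, (blockCoords k e).injective ?_⟩
    rw [blockCoords_const]
    exact Prod.ext hc h0
  · rintro ⟨c, rfl⟩
    rw [blockCoords_const]
    exact ⟨⟨c, rfl⟩, rfl⟩

theorem iso_permModQuot_blocks {φ : G →* Equiv.Perm X} {ψ : G →* Equiv.Perm Y}
    (he : ∀ (g : G) (i : Fin (k + 1)) (x : X), ψ g (e (i, x)) = e (i, φ g x)) :
    Iso (permModQuot ψ) ((permModQuot φ).prod (copies k (permMod φ))) :=
  iso_permModQuot_of_surjective ψ (blockQuot k e)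
    (fun g f => (blockQuot_apply k e _).trans (by rw [blockCoords_permHomAdd k e he]; rfl))
    (blockQuot_surjective k e) (ker_blockQuot k e)

end BlockDecomposition

theorem embedHom_apply_blockEquiv (r s : ℕ) (π : Equiv.Perm (Fin r)) (j : Fin s) (x : Fin r) :
    embedHom r s π (blockEquiv r s (j, x)) = blockEquiv r s (j, π x) := by
  simp [embedHom, Equiv.permCongr_apply]

theorem Mn_res_embedded_Sr_general (r s : ℕ) (hs : 1 < s) :
    GMod.Iso ((Mn (r * s)).res (embedHom r s))
      ((Mn r).prod (GMod.copies (s - 1) (stdMod r))) := by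
  obtain ⟨k, rfl⟩ : ∃ k, s = k + 1 := ⟨s - 1, by omega⟩
  rw [Nat.add_sub_cancel]
  show Iso (permModQuot (embedHom r (k + 1)))
    ((permModQuot (MonoidHom.id _)).prod (copies k (permMod (MonoidHom.id _))))
  exact iso_permModQuot_blocks k (blockEquiv r (k + 1)) (embedHom_apply_blockEquiv r (k + 1))

/-- Lemma 1 (decomposition): `M_{rs}` restricted to `U = S_r` is
`M_r ⊕ (Fin r → ℤ)^{⊕(s-1)}`. -/
theorem Mn_res_embedded_Sr (r s : ℕ) (hr : 1 < r) (hs : 1 < s) :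
    GMod.Iso ((Mn (r * s)).res (embedHom r s))
      ((Mn r).prod (GMod.copies (s - 1) (stdMod r))) :=
  Mn_res_embedded_Sr_general r s hs
end

section
/- Let n = m² with m > 1. Then there exists a subgroup U of S_n isomorphic to ℤ/mℤ × ℤ/mℤ such that Sha²_ω(U, M_n) ≠ 0, where M_n is viewed as a ℤ[U]-module by restriction. -/
/-! Preliminaries: a lightweight theory of `G`-modules (abelian groups with a
distributive `G`-action, i.e. `ℤ[G]`-modules), lattices, permutation modules,
flasque modules and flasque resolutions, the norm-one-torus character lattice
`Mn n` over the symmetric group `S_n`, and low-degree group cohomology with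
the invariant `Ш²_ω`. -/

open Equiv

universe u

open GMod

/-! Let `V = (ℤ/m)²` act on the `n = m²` points by its regular representation, so that
`M_n = ℤ[V]/ℤ`. As `ℤ[V]` is coinduced, an integral 3-cocycle `c` of `V` lifts to the class of
`(g, h) ↦ (x ↦ c(x⁻¹, g, h))` in `H²(V, ℤ[V]/ℤ)`, which vanishes only if `c` is a coboundary.
For `c = β(x₁ ∪ x₂)` it is not: if `c = dt`, then `C = x₁.val · x₂.val - m t` is an integral
2-cocycle, so `A(x, y) = C(x, y) - C(y, x)` is additive in `x` and `m · A((1,0), (0,1)) = 0`,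
whereas `A((1,0), (0,1)) ≡ 1 (mod m)`.

On the other hand, every cyclic subgroup `C = ⟨g⟩` acts freely, and `H²(C, ℤ[V]/ℤ) = 0`: the
"norm defect" `∑ f(gⁱ, g)` of a 2-cocycle is `C`-invariant, invariants of `ℤ[V]/ℤ` lift to
invariants of `ℤ[V]` (the lifting error is killed by `|C|`), these are norms because the action is
free, and a 2-cocycle of `C` whose norm defect is a norm is a coboundary. Hence `Ш²_ω = H² ≠ 0`. -/

theorem sum_range_orderOf_pow_add {G A : Type*} [Group G] [AddCommGroup A] (g : G) (F : G → A)
    (a : ℕ) :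
    ∑ i ∈ Finset.range (orderOf g), F (g ^ (a + i))
      = ∑ i ∈ Finset.range (orderOf g), F (g ^ i) := by
  induction a with
  | zero => simp
  | succ a ih =>
    rw [← ih]
    have h₁ := Finset.sum_range_succ (fun i => F (g ^ (a + i))) (orderOf g)
    have h₂ := Finset.sum_range_succ' (fun i => F (g ^ (a + i))) (orderOf g)
    rw [pow_add g a (orderOf g), pow_orderOf_eq_one, mul_one] at h₁
    rw [add_zero] at h₂
    simp only [← add_assoc, add_right_comm a _ 1] at h₂
    exact add_right_cancel (h₂.symm.trans h₁)

namespace Equiv.Perm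

variable {X : Type*}

theorem apply_eq_of_apply_eq_add {σ : Perm X} {d : ℕ} (hσ : σ ^ d = 1) (hd : 0 < d) {f : X → ℤ}
    {k : ℤ} (hf : ∀ x, f (σ x) = f x + k) (x : X) : f (σ x) = f x := by
  have hpow : ∀ (i : ℕ) x, f ((σ ^ i) x) = f x + i * k := fun i => by
    induction i with
    | zero => simp
    | succ i ih => intro x; rw [pow_succ', mul_apply, hf, ih]; push_cast; ring
  have hdk : (d : ℤ) * k = 0 := by simpa [hσ] using hpow d x
  rw [hf, (mul_eq_zero.mp hdk).resolve_left (by exact_mod_cast hd.ne'), add_zero]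

theorem eq_of_pow_apply_eq {σ : Perm X} {d : ℕ} (hσ : ∀ (i : ℕ) x, (σ ^ i) x = x ↔ d ∣ i) (y : X)
    {i j : ℕ} (hi : i < d) (hj : j < d) (hij : (σ ^ i) y = (σ ^ j) y) : i = j := by
  wlog hle : i ≤ j generalizing i j
  · exact (this hj hi hij.symm (le_of_not_ge hle)).symm
  have hfix : (σ ^ (j - i)) ((σ ^ i) y) = (σ ^ i) y := by
    rw [← mul_apply, ← pow_add, Nat.sub_add_cancel hle, hij]
  have := Nat.eq_zero_of_dvd_of_lt ((hσ _ _).mp hfix) (by omega)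
  omega

theorem exists_sum_pow_inv_apply_eq [Finite X] {σ : Perm X} {d : ℕ}
    (hσ : ∀ (i : ℕ) x, (σ ^ i) x = x ↔ d ∣ i) (hd : 0 < d) {f : X → ℤ} (hf : ∀ x, f (σ x) = f x) :
    ∃ w : X → ℤ, ∀ x, ∑ i ∈ Finset.range d, w ((σ ^ i)⁻¹ x) = f x := by
  classical
  have hσd : σ ^ d = 1 := ext fun x => (hσ d x).mpr dvd_rfl
  have hinv : ∀ (i : ℕ) x, f ((σ ^ i) x) = f x := fun i => by
    induction i with
    | zero => simp
    | succ i ih => intro x; rw [pow_succ', mul_apply, hf, ih]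
  let rep (x : X) : X := (Quotient.mk (SameCycle.setoid σ) x).out
  have hrep : ∀ x, SameCycle σ (rep x) x := fun x => Quotient.mk_out (s := SameCycle.setoid σ) x
  have hrep_eq : ∀ {x y}, SameCycle σ x y → rep x = rep y := fun h =>
    congrArg Quotient.out (Quotient.sound h)
  have hrep_pow : ∀ x, ∃ i < d, (σ ^ i) (rep x) = x := fun x => by
    obtain ⟨i, hi⟩ := (hrep x).exists_nat_pow_eq
    exact ⟨i % d, Nat.mod_lt i hd, by rwa [← pow_eq_pow_mod i hσd]⟩
  refine ⟨fun x => if rep x = x then f x else 0, fun x => ?_⟩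
  obtain ⟨i, hid, hi⟩ := hrep_pow x
  have hcycle : ∀ j : ℕ, rep ((σ ^ j)⁻¹ x) = rep x := fun j =>
    hrep_eq ⟨j, by rw [zpow_natCast, ← mul_apply, mul_inv_cancel, one_apply]⟩
  have hix : (σ ^ i)⁻¹ x = rep x := inv_eq_iff_eq.mpr hi.symm
  rw [Finset.sum_eq_single_of_mem i (Finset.mem_range.mpr hid)]
  · dsimp only
    rw [hcycle, hix, if_pos rfl, ← hinv i, hi]
  · intro j hj hji
    dsimp only
    rw [hcycle, if_neg]
    intro hrepj
    refine hji (eq_of_pow_apply_eq hσ (rep x) (Finset.mem_range.mp hj) hid ?_)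
    rw [hi, hrepj, ← mul_apply, mul_inv_cancel, one_apply]

end Equiv.Perm

namespace GMod

open Finset

variable {G : Type u} [Group G] {M : GMod G}

theorem H2_mk_eq_zero_iff (f : twoCocycles M) :
    (QuotientAddGroup.mk f : H2 M) = 0 ↔ f.1 ∈ (dOne M).range := by
  rw [QuotientAddGroup.eq_zero_iff, AddSubgroup.mem_addSubgroupOf]

theorem twoCocycle_apply_one (f : twoCocycles M) (x : G) : f.1 x 1 = x • f.1 1 1 := by
  have h := f.2 x 1 1
  rw [mul_one, mul_one] at h
  exact (add_right_cancel h).symm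

theorem smul_sum_twoCocycle_pow (f : twoCocycles M) (g : G) :
    g • ∑ i ∈ range (orderOf g), f.1 (g ^ i) g
      = ∑ i ∈ range (orderOf g), f.1 (g ^ i) g := by
  have hstep : ∀ i : ℕ, g • f.1 (g ^ i) g
      = f.1 (g ^ (1 + i)) g + (f.1 g (g ^ i) - f.1 g (g ^ (i + 1))) := fun i => by
    have h := f.2 g (g ^ i) g
    rw [← pow_succ', ← pow_succ] at h
    rw [add_comm 1 i]
    exact (eq_sub_of_add_eq h).trans (by abel)
  rw [Finset.smul_sum, Finset.sum_congr rfl fun i _ => hstep i, Finset.sum_add_distrib,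
    sum_range_orderOf_pow_add g (fun y => f.1 y g) 1,
    Finset.sum_range_sub' (fun i => f.1 g (g ^ i)), pow_zero, pow_orderOf_eq_one, sub_self,
    add_zero]

/-- When `w` has norm `∑ f(gⁱ, g)`, this cochain only depends on `gᵃ`, and its coboundary is
`f` on `⟨g⟩` up to the constant `f(1, 1)`. -/
def cyclicPrimitive (f : twoCocycles M) (g : G) (w : M) (a : ℕ) : M :=
  ∑ i ∈ range a, (g ^ i • w - f.1 (g ^ i) g)

theorem cyclicPrimitive_add_orderOf (f : twoCocycles M) {g : G} {w : M}
    (hw : ∑ i ∈ range (orderOf g), g ^ i • w = ∑ i ∈ range (orderOf g), f.1 (g ^ i) g)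
    (a : ℕ) : cyclicPrimitive f g w (a + orderOf g) = cyclicPrimitive f g w a := by
  have hperiod : ∑ i ∈ range (orderOf g), (g ^ i • w - f.1 (g ^ i) g) = 0 := by
    rw [Finset.sum_sub_distrib, hw, sub_self]
  rw [cyclicPrimitive, Finset.sum_range_add, sum_range_orderOf_pow_add g (fun y => y • w - f.1 y g),
    hperiod, add_zero, cyclicPrimitive]

theorem cyclicPrimitive_eq_of_pow_eq (f : twoCocycles M) {g : G} {w : M}
    (hw : ∑ i ∈ range (orderOf g), g ^ i • w = ∑ i ∈ range (orderOf g), f.1 (g ^ i) g)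
    {a b : ℕ} (hab : g ^ a = g ^ b) : cyclicPrimitive f g w a = cyclicPrimitive f g w b := by
  have hmod : ∀ a, cyclicPrimitive f g w a = cyclicPrimitive f g w (a % orderOf g) := fun a => by
    conv_lhs => rw [← Nat.mod_add_div a (orderOf g)]
    induction a / orderOf g with
    | zero => rw [mul_zero, add_zero]
    | succ q ih => rw [mul_add_one, ← add_assoc, cyclicPrimitive_add_orderOf f hw, ih]
  rw [hmod a, hmod b, pow_eq_pow_iff_modEq.mp hab]

theorem smul_cyclicPrimitive (f : twoCocycles M) (g : G) (w : M) (a b : ℕ) :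
    g ^ a • cyclicPrimitive f g w b
      = cyclicPrimitive f g w (a + b) - cyclicPrimitive f g w a
        + f.1 (g ^ a) (g ^ b) - f.1 (g ^ a) 1 := by
  induction b with
  | zero => simp [cyclicPrimitive]
  | succ b ih =>
    have hcoc := f.2 (g ^ a) (g ^ b) g
    rw [← pow_add, ← pow_succ] at hcoc
    simp only [cyclicPrimitive, ← add_assoc, Finset.sum_range_succ, smul_add, smul_sub] at ih ⊢
    rw [ih, smul_smul, ← pow_add, eq_sub_of_add_eq' hcoc]
    abel

theorem resH2_zpowers_mk_eq_zero (f : twoCocycles M) {g : G} (hg : IsOfFinOrder g) (w : M)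
    (hw : ∑ i ∈ range (orderOf g), g ^ i • w = ∑ i ∈ range (orderOf g), f.1 (g ^ i) g) :
    resH2 M (Subgroup.zpowers g).subtype (QuotientAddGroup.mk f) = 0 := by
  have hpow : ∀ h : Subgroup.zpowers g, ∃ a : ℕ, g ^ a = h := fun h =>
    hg.mem_powers_iff_mem_zpowers.mpr h.2
  choose a ha using hpow
  refine (H2_mk_eq_zero_iff _).mpr ⟨fun h => cyclicPrimitive f g w (a h) + f.1 1 1, ?_⟩
  funext h₁ h₂
  have hprod : cyclicPrimitive f g w (a (h₁ * h₂)) = cyclicPrimitive f g w (a h₁ + a h₂) :=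
    cyclicPrimitive_eq_of_pow_eq f hw (by rw [pow_add, ha, ha, ha]; rfl)
  show (h₁ : G) • (cyclicPrimitive f g w (a h₂) + f.1 1 1) - (cyclicPrimitive f g w (a (h₁ * h₂))
    + f.1 1 1) + (cyclicPrimitive f g w (a h₁) + f.1 1 1) = f.1 h₁ h₂
  rw [hprod, ← ha h₁, ← ha h₂, smul_add, smul_cyclicPrimitive, ← twoCocycle_apply_one]
  abel

end GMod

namespace IntCochain

variable {G H : Type*} [Group G] [Group H]

def dTwo (t : G → G → ℤ) (g h k : G) : ℤ := t h k - t (g * h) k + t g (h * k) - t g h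

def IsThreeCocycle (c : G → G → G → ℤ) : Prop :=
  ∀ g h k l : G, c h k l - c (g * h) k l + c g (h * k) l - c g h (k * l) + c g h k = 0

theorem isThreeCocycle_dTwo (t : G → G → ℤ) : IsThreeCocycle (dTwo t) := by
  intro g h k l
  simp only [dTwo, mul_assoc]
  ring

theorem IsThreeCocycle.of_mul_eq_dTwo {m : ℤ} (hm : m ≠ 0) {c : G → G → G → ℤ} {B : G → G → ℤ}
    (hB : ∀ g h k, dTwo B g h k = m * c g h k) : IsThreeCocycle c := by
  intro g h k l
  have h₀ := isThreeCocycle_dTwo B g h k l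
  simp only [hB] at h₀
  exact (mul_eq_zero.mp (by linear_combination h₀)).resolve_left hm

theorem IsThreeCocycle.comp {c : G → G → G → ℤ} (hc : IsThreeCocycle c) (ψ : H →* G) :
    IsThreeCocycle fun x y z => c (ψ x) (ψ y) (ψ z) := by
  intro g h k l
  simpa only [map_mul] using hc (ψ g) (ψ h) (ψ k) (ψ l)

theorem dTwo_ne_comp {c : G → G → G → ℤ} (hc : ∀ t, dTwo t ≠ c) (ψ : H ≃* G) (t : H → H → ℤ) :
    dTwo t ≠ fun x y z => c (ψ x) (ψ y) (ψ z) := by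
  intro ht
  refine hc (fun a b => t (ψ.symm a) (ψ.symm b)) (funext₃ fun a b d => ?_)
  have := congrFun₃ ht (ψ.symm a) (ψ.symm b) (ψ.symm d)
  simpa only [dTwo, map_mul, MulEquiv.apply_symm_apply] using this

theorem alt_mul_left {G : Type*} [CommGroup G] {t : G → G → ℤ} (ht : ∀ g h k, dTwo t g h k = 0)
    (x y z : G) : t (x * y) z - t z (x * y) = (t x z - t z x) + (t y z - t z y) := by
  have h₁ := ht x y z
  have h₂ := ht z x y
  have h₃ := ht x z y
  simp only [dTwo, mul_comm z] at h₁ h₂ h₃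
  linarith

theorem mul_alt_eq_zero_of_pow_eq_one {G : Type*} [CommGroup G] {t : G → G → ℤ}
    (ht : ∀ g h k, dTwo t g h k = 0) {x : G} {m : ℕ} (hx : x ^ m = 1) (z : G) :
    m * (t x z - t z x) = 0 := by
  have hone : t 1 z - t z 1 = 0 := by
    have := alt_mul_left ht 1 1 z
    rw [mul_one] at this
    linarith
  have hpow : ∀ k : ℕ, t (x ^ k) z - t z (x ^ k) = k * (t x z - t z x) := fun k => by
    induction k with
    | zero => simpa using hone
    | succ k ih => rw [pow_succ, alt_mul_left ht, ih]; push_cast; ring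
  rw [← hpow, hx, hone]

end IntCochain

namespace GMod.permModQuot

open IntCochain

variable {G X : Type u} [Group G] (φ : G →* Perm X)

def mk : (X → ℤ) →+ (permModQuot φ).carrier := QuotientAddGroup.mk' (normSub X)

theorem mk_surjective : Function.Surjective (mk φ) := QuotientAddGroup.mk'_surjective _

theorem smul_mk (g : G) (f : X → ℤ) : g • mk φ f = mk φ (fun x => f ((φ g)⁻¹ x)) := rfl

theorem mk_eq_mk_iff {f f' : X → ℤ} : mk φ f = mk φ f' ↔ ∃ k : ℤ, ∀ x, f x = f' x + k := by
  show (QuotientAddGroup.mk f : (X → ℤ) ⧸ normSub X) = QuotientAddGroup.mk f' ↔ _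
  rw [QuotientAddGroup.eq, normSub, AddSubgroup.mem_zmultiples_iff]
  constructor
  · rintro ⟨k, hk⟩
    refine ⟨-k, fun x => ?_⟩
    have := congrFun hk x
    simp only [Pi.smul_apply, smul_eq_mul, mul_one, Pi.add_apply, Pi.neg_apply] at this
    linarith
  · rintro ⟨k, hk⟩
    exact ⟨-k, funext fun x => by simp [hk x]⟩

variable {φ}

theorem exists_sum_pow_smul_eq_of_smul_eq [Finite X] (hfree : ∀ g x, φ g x = x → g = 1) {g : G}
    (hg : IsOfFinOrder g) {q : permModQuot φ} (hq : g • q = q) :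
    ∃ w : permModQuot φ, ∑ i ∈ Finset.range (orderOf g), g ^ i • w = q := by
  obtain ⟨f, rfl⟩ := mk_surjective φ q
  obtain ⟨k, hk⟩ := (mk_eq_mk_iff φ).mp hq
  have hσ : ∀ (i : ℕ) x, (φ g ^ i) x = x ↔ orderOf g ∣ i := fun i x => by
    rw [← map_pow, orderOf_dvd_iff_pow_eq_one]
    exact ⟨hfree _ x, fun h => by rw [h, map_one, Perm.one_apply]⟩
  have hσinv : (φ g)⁻¹ ^ orderOf g = 1 := by
    rw [inv_pow, ← map_pow, pow_orderOf_eq_one, map_one, inv_one]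
  have hinv := Perm.apply_eq_of_apply_eq_add hσinv hg.orderOf_pos hk
  obtain ⟨w, hw⟩ := Perm.exists_sum_pow_inv_apply_eq hσ hg.orderOf_pos (f := f)
    (fun x => by simpa using (hinv (φ g x)).symm)
  refine ⟨mk φ w, ?_⟩
  simp only [smul_mk, ← map_sum]
  congr 1
  funext x
  simp only [Finset.sum_apply, map_pow, hw]

theorem sha2omega_eq_top [Finite G] [Finite X] (hfree : ∀ g x, φ g x = x → g = 1) :
    Sha2omega (permModQuot φ) = ⊤ := by
  refine eq_top_iff.mpr fun c _ => AddSubgroup.mem_iInf.mpr fun g => ?_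
  induction c using QuotientAddGroup.induction_on with
  | H f =>
    have hg := isOfFinOrder_of_finite g
    obtain ⟨w, hw⟩ := exists_sum_pow_smul_eq_of_smul_eq hfree hg (smul_sum_twoCocycle_pow f g)
    exact resH2_zpowers_mk_eq_zero f hg w hw

theorem mk_mem_twoCocycles {F : G → G → X → ℤ} {c : G → G → G → ℤ}
    (hF : ∀ g h k x, F h k ((φ g)⁻¹ x) - F (g * h) k x + F g (h * k) x - F g h x = c g h k) :
    (fun g h => mk φ (F g h)) ∈ twoCocycles (permModQuot φ) := by
  intro g h k
  simp only [smul_mk, ← map_add]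
  exact (mk_eq_mk_iff φ).mpr ⟨c g h k, fun x => by simp only [Pi.add_apply]; linarith [hF g h k x]⟩

theorem exists_dTwo_eq_of_mk_mem_range [Nonempty X] {F : G → G → X → ℤ} {c : G → G → G → ℤ}
    (hF : ∀ g h k x, F h k ((φ g)⁻¹ x) - F (g * h) k x + F g (h * k) x - F g h x = c g h k)
    (hcob : (fun g h => mk φ (F g h)) ∈ (dOne (permModQuot φ)).range) :
    ∃ t, dTwo t = c := by
  obtain ⟨b, hb⟩ := hcob
  choose b' hb' using fun g => mk_surjective φ (b g)
  have hlift : ∀ g h, ∃ s : ℤ, ∀ x, F g h x = b' h ((φ g)⁻¹ x) - b' (g * h) x + b' g x + s :=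
    fun g h => (mk_eq_mk_iff φ).mp <| by
      rw [← congrFun₂ hb g h]
      simp only [dOne, AddMonoidHom.coe_mk, ZeroHom.coe_mk, ← hb', smul_mk, ← map_sub, ← map_add]
      rfl
  choose t ht using hlift
  refine ⟨t, funext₃ fun g h k => ?_⟩
  obtain ⟨x⟩ := ‹Nonempty X›
  have := hF g h k x
  rw [ht, ht, ht, ht, map_mul, mul_inv_rev, Perm.mul_apply, mul_assoc] at this
  simp only [dTwo]
  linarith

/-- The cocycle identity of `c` at `((pt x)⁻¹, g, h, k)`: a free action makes `ℤ[X]` coinduced,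
and this lifts `c` to the `ℤ[X]`-valued 2-cochain `(g, h) ↦ (x ↦ c((pt x)⁻¹, g, h))`. -/
theorem coboundary_eq_of_equivariant {pt : X → G} (hpt : ∀ g x, pt (φ g x) = g * pt x)
    {c : G → G → G → ℤ} (hc : IsThreeCocycle c) (g h k : G) (x : X) :
    c (pt ((φ g)⁻¹ x))⁻¹ h k - c (pt x)⁻¹ (g * h) k + c (pt x)⁻¹ g (h * k) - c (pt x)⁻¹ g h
      = c g h k := by
  have hinv : pt ((φ g)⁻¹ x) = g⁻¹ * pt x := by rw [← map_inv, hpt]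
  rw [hinv, mul_inv_rev, inv_inv]
  linear_combination -hc (pt x)⁻¹ g h k

theorem sha2omega_ne_bot [Finite G] [Finite X] [Nonempty X] {pt : X → G}
    (hpt : ∀ g x, pt (φ g x) = g * pt x) {c : G → G → G → ℤ} (hc : IsThreeCocycle c)
    (hnc : ∀ t, dTwo t ≠ c) : Sha2omega (permModQuot φ) ≠ ⊥ := by
  have hfree : ∀ g x, φ g x = x → g = 1 := fun g x hx => by
    simpa using (congrArg pt hx).symm.trans (hpt g x)
  have hF := coboundary_eq_of_equivariant hpt hc
  rw [sha2omega_eq_top hfree]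
  intro htop
  have hzero : (QuotientAddGroup.mk ⟨_, mk_mem_twoCocycles (F := fun g h x => c (pt x)⁻¹ g h) hF⟩
      : H2 (permModQuot φ)) = 0 :=
    AddSubgroup.mem_bot.mp (htop ▸ AddSubgroup.mem_top _)
  obtain ⟨t, ht⟩ := exists_dTwo_eq_of_mk_mem_range hF ((H2_mk_eq_zero_iff _).mp hzero)
  exact hnc t ht

end GMod.permModQuot

namespace ZMod

variable {m : ℕ}

def carry (a b : ZMod m) : ℤ := ((a.val + b.val) / m : ℕ)

theorem val_add_add_mul_carry [NeZero m] (a b : ZMod m) :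
    ((a + b).val : ℤ) + m * carry a b = a.val + b.val := by
  rw [carry, val_add]
  exact_mod_cast Nat.mod_add_div _ _

end ZMod

namespace IntCochain

open ZMod

variable {m : ℕ}

def valMul (v w : Multiplicative (ZMod m × ZMod m)) : ℤ := (v.toAdd.1.val : ℤ) * w.toAdd.2.val

/-- The Bockstein `β(x₁ ∪ x₂)` of the cup product of the two coordinate characters
`x₁, x₂ : (ℤ/m)² → ℤ/m`, i.e. `(1/m) · d(valMul)`. -/
def bocksteinCup (u v w : Multiplicative (ZMod m × ZMod m)) : ℤ :=
  carry u.toAdd.1 v.toAdd.1 * w.toAdd.2.val - u.toAdd.1.val * carry v.toAdd.2 w.toAdd.2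

theorem dTwo_valMul [NeZero m] (u v w : Multiplicative (ZMod m × ZMod m)) :
    dTwo valMul u v w = m * bocksteinCup u v w := by
  simp only [dTwo, valMul, bocksteinCup, toAdd_mul, Prod.fst_add, Prod.snd_add]
  linear_combination (u.toAdd.1.val : ℤ) * val_add_add_mul_carry v.toAdd.2 w.toAdd.2
    - (w.toAdd.2.val : ℤ) * val_add_add_mul_carry u.toAdd.1 v.toAdd.1

theorem isThreeCocycle_bocksteinCup [NeZero m] : IsThreeCocycle (bocksteinCup (m := m)) :=
  .of_mul_eq_dTwo (Int.natCast_ne_zero.mpr (NeZero.ne m)) dTwo_valMul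

theorem dTwo_ne_bocksteinCup (hm : 1 < m) (t : Multiplicative (ZMod m × ZMod m) → _ → ℤ) :
    dTwo t ≠ bocksteinCup := by
  have : Fact (1 < m) := ⟨hm⟩
  intro ht
  let σ : Multiplicative (ZMod m × ZMod m) := .ofAdd (1, 0)
  let τ : Multiplicative (ZMod m × ZMod m) := .ofAdd (0, 1)
  have hcoc : ∀ g h k, dTwo (fun v w => valMul v w - m * t v w) g h k = 0 := fun g h k => by
    have := dTwo_valMul g h k
    rw [← ht] at this
    simp only [dTwo] at this ⊢
    linarith
  have hσ : σ ^ m = 1 := by simp [σ, ← ofAdd_nsmul]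
  have halt := mul_alt_eq_zero_of_pow_eq_one hcoc hσ τ
  have hval : valMul σ τ - valMul τ σ = 1 := by simp [σ, τ, valMul, ZMod.val_one]
  have hdvd : (m : ℤ) ∣ 1 := ⟨t σ τ - t τ σ, by
    have := (mul_eq_zero.mp halt).resolve_left (by exact_mod_cast (by omega : m ≠ 0))
    linarith⟩
  have := Int.eq_one_of_dvd_one (by positivity) hdvd
  omega

end IntCochain

section RegularRepresentation

variable {G : Type u} [Group G] {n : ℕ} (e : G ≃ Fin n)

def regularPermHom : G →* Perm (Fin n) :=
  (Equiv.permCongrHom e).toMonoidHom.comp (MulAction.toPermHom G G)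

theorem regularPermHom_apply (g : G) (x : Fin n) : regularPermHom e g x = e (g * e.symm x) := rfl

theorem regularPermHom_injective : Function.Injective (regularPermHom e) :=
  (Equiv.permCongrHom e).injective.comp MulAction.toPerm_injective

theorem ofInjective_regularPermHom_symm_apply (u : (regularPermHom e).range) (x : Fin n) :
    MonoidHom.ofInjective (regularPermHom_injective e) (e.symm ((u : Perm (Fin n)) x))
      = u * MonoidHom.ofInjective (regularPermHom_injective e) (e.symm x) := by
  obtain ⟨g, rfl⟩ := (MonoidHom.ofInjective (regularPermHom_injective e)).surjective u
  ext1
  simp [MonoidHom.ofInjective_apply, regularPermHom_apply]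

end RegularRepresentation

/-- For `n = m²`, there is a subgroup `U ≅ ℤ/mℤ × ℤ/mℤ` of `S_n` such that
`Ш²_ω(U, M_n) ≠ 0`. -/
theorem sha_Mn_nontrivial_of_square (n m : ℕ) (hm : 1 < m) (hn : n = m ^ 2) :
    ∃ U : Subgroup (Equiv.Perm (Fin n)),
      Nonempty (↥U ≃* Multiplicative (ZMod m × ZMod m)) ∧
      Sha2omega ((Mn n).res U.subtype) ≠ ⊥ := by
  have : NeZero m := ⟨by omega⟩
  have : NeZero n := ⟨hn ▸ pow_ne_zero 2 (NeZero.ne m)⟩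
  let e : Multiplicative (ZMod m × ZMod m) ≃ Fin n := Fintype.equivFinOfCardEq (by simp [hn, sq])
  let ψ := MonoidHom.ofInjective (regularPermHom_injective e)
  refine ⟨(regularPermHom e).range, ⟨ψ.symm⟩, ?_⟩
  change Sha2omega (permModQuot (regularPermHom e).range.subtype) ≠ ⊥
  exact permModQuot.sha2omega_ne_bot (pt := fun x => ψ (e.symm x))
    (ofInjective_regularPermHom_symm_apply e)
    (IntCochain.isThreeCocycle_bocksteinCup.comp ψ.symm.toMonoidHom)
    (IntCochain.dTwo_ne_comp (IntCochain.dTwo_ne_bocksteinCup hm) ψ.symm)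
end

section
/- For every n = m² with m > 1 and every flasque resolution 0 → M_n → S → N → 0 of ℤ[S_n]-lattices, the cokernel N is not stably permutation. (Algebraic form of: the generic norm-one torus T_n is not stably rational when n is a square.) -/
/-! Preliminaries: a lightweight theory of `G`-modules (abelian groups with a
distributive `G`-action, i.e. `ℤ[G]`-modules), lattices, permutation modules,
flasque modules and flasque resolutions, the norm-one-torus character lattice
`Mn n` over the symmetric group `S_n`, and low-degree group cohomology with
the invariant `Ш²_ω`. -/

open Equiv

universe u

open GMod


/-! ### Auxiliary development for the proof -/

set_option linter.unusedSectionVars false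
namespace SqAux

variable (p : ℕ) [Fact p.Prime]

lemma p_pos : 0 < p := (Fact.out : p.Prime).pos
lemma p_two_le : 2 ≤ p := (Fact.out : p.Prime).two_le

instance : NeZero p := ⟨(Fact.out : p.Prime).ne_zero⟩

/-- carry of addition in `ZMod p`, as an integer. -/
def carry (u v : ZMod p) : ℤ := if p ≤ u.val + v.val then 1 else 0

variable {p}

lemma val_add_carry (u v : ZMod p) :
    (((u + v).val : ℤ)) = u.val + v.val - p * carry p u v := by
  have hu := ZMod.val_lt u
  have hv := ZMod.val_lt v
  have h := ZMod.val_add u v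
  unfold carry
  by_cases hif : p ≤ u.val + v.val
  · rw [if_pos hif]
    have h2 : u.val + v.val - p < p := by omega
    have : (u+v).val = u.val + v.val - p := by
      rw [h, Nat.mod_eq_sub_mod hif, Nat.mod_eq_of_lt h2]
    omega
  · rw [if_neg hif]
    have : (u+v).val = u.val + v.val := by
      rw [h, Nat.mod_eq_of_lt (by omega)]
    omega

lemma carry_assoc (a b c : ZMod p) :
    carry p b c + carry p a (b + c) = carry p (a + b) c + carry p a b := by
  have h1 := val_add_carry b c
  have h2 := val_add_carry a (b + c)
  have h3 := val_add_carry a b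
  have h4 := val_add_carry (a + b) c
  have h5 : ((a + b + c).val : ℤ) = ((a + (b+c)).val : ℤ) := by rw [add_assoc]
  have hp : (p : ℤ) ≠ 0 := by exact_mod_cast (p_pos p).ne'
  have : (p:ℤ) * (carry p b c + carry p a (b + c)) =
      (p:ℤ) * (carry p (a + b) c + carry p a b) := by linarith
  exact mul_left_cancel₀ hp this

/-- carry of subtraction. -/
def eps (x a : ZMod p) : ℤ := carry p (x - a) a

lemma val_sub_eps (x a : ZMod p) :
    (((x - a).val : ℤ)) = x.val - a.val + p * eps x a := by
  have h := val_add_carry (x - a) a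
  rw [sub_add_cancel] at h
  unfold eps
  linarith

lemma eps_assoc (x a b : ZMod p) :
    eps x a + eps (x - a) b = carry p a b + eps x (a + b) := by
  have h1 := val_sub_eps x a
  have h2 := val_sub_eps (x - a) b
  have h3 := val_sub_eps x (a + b)
  have h4 := val_add_carry a b
  have h5 : ((x - a - b).val : ℤ) = ((x - (a+b)).val : ℤ) := by rw [sub_sub]
  have hp : (p : ℤ) ≠ 0 := by exact_mod_cast (p_pos p).ne'
  have : (p:ℤ) * (eps x a + eps (x-a) b) = (p:ℤ) * (carry p a b + eps x (a + b)) := by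
    linarith
  exact mul_left_cancel₀ hp this

lemma carry_sq (u v : ZMod p) : carry p u v * carry p u v = carry p u v := by
  unfold carry; split <;> ring

lemma carry_zero_zero : carry p 0 0 = 0 := by
  unfold carry
  rw [ZMod.val_zero]
  simp [Nat.not_le.mpr (p_pos p)]

end SqAux

namespace SqAux

section Concrete

variable (p : ℕ) [Fact p.Prime]

/-- The elementary abelian group `(ℤ/p)²`. -/
abbrev Ap := ZMod p × ZMod p

variable {n : ℕ} (φ : Ap p → Equiv.Perm (Fin n)) (ξ : Fin n → Ap p)

/-- The integral 2-cochain lifting our exotic class. -/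
def Fc (a b : Ap p) : Fin n → ℤ :=
  fun x => carry p a.2 b.2 * ((ξ x).1.val : ℤ) + (b.2.val : ℤ) * eps (ξ x).1 a.1

variable (hφ : ∀ a b : Ap p, φ (a + b) = φ a * φ b)
  (hξ : ∀ (a : Ap p) (x : Fin n), ξ ((φ a)⁻¹ x) = ξ x - a)

include hξ in
/-- the key cocycle-defect identity for `Fc`. -/
lemma Fc_cocycle (a b c : Ap p) (x : Fin n) :
    Fc p ξ b c ((φ a)⁻¹ x) + Fc p ξ a (b + c) x - Fc p ξ (a + b) c x - Fc p ξ a b x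
      = (c.2.val : ℤ) * carry p a.1 b.1 - (a.1.val : ℤ) * carry p b.2 c.2 := by
  have hx := hξ a x
  unfold Fc
  rw [hx]
  have h1 : ((ξ x).1 - a.1 : ZMod p) = (ξ x - a).1 := rfl
  have h2 : ((ξ x).2 - a.2 : ZMod p) = (ξ x - a).2 := rfl
  set X := (ξ x).1 with hX
  have e1 := val_sub_eps X a.1
  have e2 := val_add_carry b.2 c.2
  have e3 := carry_assoc a.2 b.2 c.2
  have e4 := eps_assoc X a.1 b.1
  have h5 : (ξ x - a).1 = X - a.1 := rfl
  rw [h5]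
  linear_combination (carry p b.2 c.2) * e1 + (eps X a.1 : ℤ) * e2 + (X.val : ℤ) * e3
    + (c.2.val : ℤ) * e4

/-- The rational cochain `ω̃`. -/
def omt (a b : Ap p) : ℚ := (a.1.val * b.2.val : ℚ) / p

lemma omt_delta (a b c : Ap p) :
    omt p b c - omt p (a + b) c + omt p a (b + c) - omt p a b
      = (c.2.val : ℤ) * carry p a.1 b.1 - (a.1.val : ℤ) * carry p b.2 c.2 := by
  unfold omt
  have hp : (p : ℚ) ≠ 0 := by exact_mod_cast (p_pos p).ne'
  have e1 := val_add_carry a.1 b.1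
  have e2 := val_add_carry b.2 c.2
  have h1 : ((a+b).1 : ZMod p) = a.1 + b.1 := rfl
  have h2 : ((b+c).2 : ZMod p) = b.2 + c.2 := rfl
  rw [h1, h2]
  field_simp
  have e1q : (((a.1+b.1 : ZMod p).val : ℚ)) = a.1.val + b.1.val - p * carry p a.1 b.1 := by
    exact_mod_cast congrArg (fun z : ℤ => (z : ℚ)) e1
  have e2q : (((b.2+c.2 : ZMod p).val : ℚ)) = b.2.val + c.2.val - p * carry p b.2 c.2 := by
    exact_mod_cast congrArg (fun z : ℤ => (z : ℚ)) e2
  simp only [ZMod.natCast_val, ZMod.intCast_cast] at e1q e2q ⊢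
  linear_combination (-(ZMod.cast c.2) : ℚ) * e1q + (ZMod.cast a.1 : ℚ) * e2q

end Concrete

end SqAux



namespace SqAux

section MSide

variable (p : ℕ) [Fact p.Prime] {n : ℕ}

/-- The quotient map onto the carrier of `Mn n`. -/
def mkM : (Fin n → ℤ) →+ (GMod.Mn n).carrier :=
  QuotientAddGroup.mk' (GMod.normSub (Fin n))

lemma mkM_smul (g : Equiv.Perm (Fin n)) (v : Fin n → ℤ) :
    g • (mkM v) = mkM (fun x => v (g⁻¹ x)) := by
  show QuotientAddGroup.map _ _ (GMod.permHomAdd ((MonoidHom.id _) g)) _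
      (QuotientAddGroup.mk v) = _
  rw [QuotientAddGroup.map_mk]
  rfl

lemma mkM_const (c : ℤ) : (mkM (fun _ : Fin n => c)) = 0 := by
  have hmem : (fun _ : Fin n => c) ∈ GMod.normSub (Fin n) :=
    AddSubgroup.mem_zmultiples_iff.mpr ⟨c, by funext x; simp⟩
  exact (QuotientAddGroup.eq_zero_iff _).mpr hmem

lemma mkM_eq_iff (v w : Fin n → ℤ) :
    mkM v = mkM w ↔ ∃ c : ℤ, v - w = fun _ => c := by
  constructor
  · intro h
    have := (QuotientAddGroup.mk'_eq_mk' _).mp h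
    obtain ⟨z, hz, hzw⟩ := this
    obtain ⟨c, rfl⟩ := AddSubgroup.mem_zmultiples_iff.mp hz
    refine ⟨-c, ?_⟩
    have h3 : v + c • (fun _ => (1:ℤ)) = w := hzw
    funext x
    have h4 := congrFun h3 x
    simp only [Pi.add_apply, Pi.smul_apply, smul_eq_mul, mul_one] at h4
    simp only [Pi.sub_apply]
    linarith
  · rintro ⟨c, hc⟩
    have : v = w + fun _ => c := by
      funext x; have h5 := congrFun hc x; simp only [Pi.sub_apply] at h5
      simp only [Pi.add_apply]; linarith
    rw [this, map_add, mkM_const, add_zero]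

variable (φ : Ap p → Equiv.Perm (Fin n)) (ξ : Fin n → Ap p)

/-- Our exotic 2-cocycle with values in `Mn n`. -/
def fM (a b : Ap p) : (GMod.Mn n).carrier := mkM (Fc p ξ a b)

variable (hφ : ∀ a b : Ap p, φ (a + b) = φ a * φ b)
  (hξ : ∀ (a : Ap p) (x : Fin n), ξ ((φ a)⁻¹ x) = ξ x - a)

include hξ in
lemma fM_cocycle (a b c : Ap p) :
    φ a • fM p ξ b c + fM p ξ a (b + c) = fM p ξ (a + b) c + fM p ξ a b := by
  unfold fM
  rw [mkM_smul, ← map_add, ← map_add, mkM_eq_iff]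
  refine ⟨(c.2.val : ℤ) * carry p a.1 b.1 - (a.1.val : ℤ) * carry p b.2 c.2, ?_⟩
  funext x
  have := Fc_cocycle p φ ξ hξ a b c x
  simp only [Pi.sub_apply, Pi.add_apply]
  linarith

include hφ hξ in
lemma fM_not_coboundary (hn0 : 0 < n)
    (c : Ap p → (GMod.Mn n).carrier)
    (hc : ∀ a b : Ap p, fM p ξ a b = φ a • c b - c (a + b) + c a) : False := by
  -- lift `c` to integer-valued functions
  have hlift : ∀ a : Ap p, ∃ v : Fin n → ℤ, mkM v = c a := fun a =>
    QuotientAddGroup.mk'_surjective _ (c a)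
  choose v hv using hlift
  -- the integral defect `z`
  have hz : ∀ a b : Ap p, ∃ z : ℤ,
      (fun x => v b ((φ a)⁻¹ x)) - v (a+b) + v a - Fc p ξ a b = fun _ => z := by
    intro a b
    have h1 : mkM ((fun x => v b ((φ a)⁻¹ x)) - v (a+b) + v a) = mkM (Fc p ξ a b) := by
      rw [map_add, map_sub]
      have h2 : mkM (n := n) (fun x => v b ((φ a)⁻¹ x)) = φ a • c b := by
        rw [← hv b, mkM_smul]
      simp only [h2, hv]
      exact (hc a b).symm
    obtain ⟨z, hzz⟩ := (mkM_eq_iff _ _).mp h1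
    exact ⟨z, hzz⟩
  choose z hzfun using hz
  have hzpt : ∀ (a b : Ap p) (x : Fin n),
      v b ((φ a)⁻¹ x) - v (a+b) x + v a x - Fc p ξ a b x = z a b := by
    intro a b x
    have := congrFun (hzfun a b) x
    simpa using this
  -- the δz identity
  have hδz : ∀ a b c : Ap p,
      z b c - z (a+b) c + z a (b+c) - z a b
        = -((c.2.val : ℤ) * carry p a.1 b.1 - (a.1.val : ℤ) * carry p b.2 c.2) := by
    intro a b c
    obtain ⟨x, _⟩ : ∃ x : Fin n, True := ⟨⟨0, hn0⟩, trivial⟩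
    have k1 := hzpt b c ((φ a)⁻¹ x)
    have k2 := hzpt (a+b) c x
    have k3 := hzpt a (b+c) x
    have k4 := hzpt a b x
    have hcomp : ∀ y : Fin n, (φ b)⁻¹ ((φ a)⁻¹ y) = (φ (a+b))⁻¹ y := by
      intro y
      rw [hφ]
      simp [Equiv.Perm.mul_apply]
    rw [hcomp] at k1
    have hassoc2 : a + b + c = a + (b + c) := by ring
    rw [hassoc2] at k2
    have kF := Fc_cocycle p φ ξ hξ a b c x
    linarith
  -- rationalize
  set w : Ap p → Ap p → ℚ := fun a b => omt p a b + (z a b : ℚ) with hw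
  have hδw : ∀ a b c : Ap p, w b c - w (a+b) c + w a (b+c) - w a b = 0 := by
    intro a b c
    have h1 := omt_delta p a b c
    have h2 := hδz a b c
    have h2q : ((z b c : ℚ)) - z (a+b) c + z a (b+c) - z a b
        = -(((c.2.val : ℤ) : ℚ) * ((carry p a.1 b.1 : ℤ) : ℚ)
            - ((a.1.val : ℤ) : ℚ) * ((carry p b.2 c.2 : ℤ) : ℚ)) := by
      exact_mod_cast congrArg (fun t : ℤ => (t : ℚ)) h2
    simp only [hw]
    push_cast at h1 h2q ⊢
    linarith
  -- averaging: `w` is symmetric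
  have hcard : (Fintype.card (Ap p) : ℚ) ≠ 0 := by
    exact_mod_cast Fintype.card_ne_zero
  have havg : ∀ a b : Ap p, (Fintype.card (Ap p) : ℚ) * w a b
      = (∑ t : Ap p, w b t) - (∑ t : Ap p, w (a+b) t) + (∑ t : Ap p, w a t) := by
    intro a b
    have hsum : ∑ t : Ap p, (w b t - w (a+b) t + w a (b+t) - w a b) = 0 := by
      refine Finset.sum_eq_zero ?_
      intro t _
      exact hδw a b t
    have hre : ∑ t : Ap p, w a (b+t) = ∑ t : Ap p, w a t :=
      Fintype.sum_equiv (Equiv.addLeft b) _ _ (fun t => rfl)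
    rw [Finset.sum_sub_distrib, Finset.sum_add_distrib, Finset.sum_sub_distrib, hre] at hsum
    simp only [Finset.sum_const, Finset.card_univ, nsmul_eq_mul] at hsum
    linarith
  have hsymm : ∀ a b : Ap p, w a b = w b a := by
    intro a b
    have h1 := havg a b
    have h2 := havg b a
    rw [add_comm b a] at h2
    have : (Fintype.card (Ap p) : ℚ) * w a b = (Fintype.card (Ap p) : ℚ) * w b a := by
      linarith
    exact mul_left_cancel₀ hcard this
  -- evaluate at the witnessing pair
  have h1lt : 1 < p := p_two_le p
  set a₀ : Ap p := (1, 0) with ha₀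
  set b₀ : Ap p := (0, 1) with hb₀
  have hval1 : ((1 : ZMod p)).val = 1 := ZMod.val_one p
  have hval0 : ((0 : ZMod p)).val = 0 := ZMod.val_zero
  have hsab : w a₀ b₀ = w b₀ a₀ := hsymm a₀ b₀
  have hppos : (0:ℚ) < p := by exact_mod_cast p_pos p
  have homt1 : omt p a₀ b₀ = 1 / p := by
    unfold omt
    simp [ha₀, hb₀, hval1]
  have homt2 : omt p b₀ a₀ = 0 := by
    unfold omt
    simp [ha₀, hb₀, hval0]
  have key : (1 : ℚ) / p + (z a₀ b₀ : ℚ) = (z b₀ a₀ : ℚ) := by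
    simp only [hw, homt1, homt2] at hsab
    linarith
  have key2 : (1 : ℚ) = ((z b₀ a₀ - z a₀ b₀ : ℤ) : ℚ) * p := by
    push_cast
    field_simp at key
    linarith
  have key3 : (1 : ℤ) = (z b₀ a₀ - z a₀ b₀) * p := by exact_mod_cast key2
  have : (p : ℤ) ∣ 1 := ⟨z b₀ a₀ - z a₀ b₀, by linarith [key3]⟩
  have := Int.le_of_dvd one_pos this
  omega

end MSide

end SqAux



namespace SqAux

section Alpha

variable (p : ℕ) [Fact p.Prime] {n : ℕ}

/-- The integral correction 2-cochain on a line. -/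
def Gz (t : ZMod p) (a b : Ap p) : ℤ :=
  ((a.1.val : ℤ) - (t.val : ℤ) * (a.2.val : ℤ)) / p * (b.2.val : ℤ)
    + (t.val : ℤ) * carry p a.2 b.2 * ((a.2.val : ℤ) + (b.2.val : ℤ) - p)

/-- The rational primitive on a line. -/
def muL (t : ZMod p) (a : Ap p) : ℚ :=
  ((t.val : ℚ) * (a.2.val : ℚ) * ((p : ℚ) - (a.2.val : ℚ))) / (2 * p)

/-- Membership in the line with slope `t`. -/
def Lrel (t : ZMod p) (a : Ap p) : Prop := a.1 = t * a.2

variable {p}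

lemma Lrel_add {t : ZMod p} {a b : Ap p} (ha : Lrel p t a) (hb : Lrel p t b) :
    Lrel p t (a + b) := by
  unfold Lrel at *
  show a.1 + b.1 = t * (a.2 + b.2)
  rw [ha, hb]; ring

lemma Lrel_neg {t : ZMod p} {a : Ap p} (ha : Lrel p t a) : Lrel p t (-a) := by
  unfold Lrel at *
  show -a.1 = t * (-a.2)
  rw [ha]; ring

lemma Lrel_dvd {t : ZMod p} {a : Ap p} (ha : Lrel p t a) :
    (p : ℤ) ∣ ((a.1.val : ℤ) - (t.val : ℤ) * (a.2.val : ℤ)) := by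
  have : (((a.1.val : ℤ) - (t.val : ℤ) * (a.2.val : ℤ) : ℤ) : ZMod p) = 0 := by
    push_cast
    rw [ZMod.natCast_val, ZMod.natCast_val, ZMod.natCast_val,
      ZMod.cast_id, ZMod.cast_id, ZMod.cast_id, ha]
    ring
  exact (ZMod.intCast_zmod_eq_zero_iff_dvd _ p).mp this

lemma keyG {t : ZMod p} {a b : Ap p} (ha : Lrel p t a) (hb : Lrel p t b) :
    ((Gz p t a b : ℤ) : ℚ)
      = omt p a b - (muL p t b - muL p t (a + b) + muL p t a) := by
  obtain ⟨q, hq⟩ := Lrel_dvd ha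
  have hp0 : (p : ℤ) ≠ 0 := by exact_mod_cast (p_pos p).ne'
  have hpq : (p : ℚ) ≠ 0 := by exact_mod_cast (p_pos p).ne'
  have hdiv : ((a.1.val : ℤ) - (t.val : ℤ) * (a.2.val : ℤ)) / p = q := by
    rw [hq]; exact Int.mul_ediv_cancel_left q hp0
  have hsq := carry_sq a.2 b.2
  have he := val_add_carry a.2 b.2
  have ha1 : ((a.1.val : ℚ)) = p * q + (t.val : ℚ) * (a.2.val : ℚ) := by
    have := congrArg (fun z : ℤ => (z : ℚ)) hq
    push_cast at this
    linarith
  have heq : (((a.2 + b.2 : ZMod p).val : ℚ))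
      = (a.2.val : ℚ) + (b.2.val : ℚ) - p * ((carry p a.2 b.2 : ℤ) : ℚ) := by
    exact_mod_cast congrArg (fun z : ℤ => (z : ℚ)) he
  have hsq' : (((carry p a.2 b.2 : ℤ) : ℚ)) * ((carry p a.2 b.2 : ℤ) : ℚ)
      = ((carry p a.2 b.2 : ℤ) : ℚ) := by exact_mod_cast congrArg (fun z : ℤ => (z : ℚ)) hsq
  unfold Gz omt muL
  have h2 : ((a + b).2 : ZMod p) = a.2 + b.2 := rfl
  rw [hdiv, h2]
  push_cast
  rw [heq, ha1]
  have hsq2 : ((carry p a.2 b.2 : ℤ) : ℚ)^2 = ((carry p a.2 b.2 : ℤ) : ℚ) := by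
    rw [sq]; exact hsq'
  field_simp
  linear_combination ((t.val : ℚ) * (p:ℚ)^2) * hsq2

lemma keyδG {t : ZMod p} {a b c : Ap p} (ha : Lrel p t a) (hb : Lrel p t b) (hc : Lrel p t c) :
    Gz p t b c - Gz p t (a+b) c + Gz p t a (b+c) - Gz p t a b
      = (c.2.val : ℤ) * carry p a.1 b.1 - (a.1.val : ℤ) * carry p b.2 c.2 := by
  have k1 := keyG hb hc
  have k2 := keyG (Lrel_add ha hb) hc
  have k3 := keyG ha (Lrel_add hb hc)
  have k4 := keyG ha hb
  have kd := omt_delta p a b c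
  have hassoc : a + b + c = a + (b + c) := by ring
  rw [hassoc] at k2
  have : ((Gz p t b c - Gz p t (a+b) c + Gz p t a (b+c) - Gz p t a b : ℤ) : ℚ)
      = (((c.2.val : ℤ) * carry p a.1 b.1 - (a.1.val : ℤ) * carry p b.2 c.2 : ℤ) : ℚ) := by
    push_cast at k1 k2 k3 k4 ⊢
    push_cast at kd
    linarith
  exact_mod_cast this

end Alpha

end SqAux



namespace SqAux

section PhiGeneric

variable (p : ℕ) [Fact p.Prime] {α : Type*}
variable (φ : Ap p → Equiv.Perm α) (hφ : ∀ a b : Ap p, φ (a + b) = φ a * φ b)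

include hφ

lemma phi_zero : φ 0 = 1 := by
  have h := hφ 0 0
  rw [add_zero] at h
  have := mul_right_cancel (a := φ 0) (b := φ 0) (c := 1) (by rw [one_mul, ← h])
  exact this

lemma phi_neg (a : Ap p) : φ (-a) = (φ a)⁻¹ := by
  have h := hφ (-a) a
  rw [neg_add_cancel, phi_zero p φ hφ] at h
  exact eq_inv_of_mul_eq_one_left h.symm

end PhiGeneric

end SqAux

namespace SqAux

section Alpha2

variable (p : ℕ) [Fact p.Prime] {n : ℕ}
variable (φ : Ap p → Equiv.Perm (Fin n)) (ξ : Fin n → Ap p)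

/-- the retraction onto the line through `s`. -/
def rho (s : Ap p) (x : Fin n) : Ap p :=
  (((ξ x).2 * s.2⁻¹) * s.1, ((ξ x).2 * s.2⁻¹) * s.2)

/-- the contracting 1-cochain on the line through `s`. -/
def ct (s : Ap p) (g : Ap p) : Fin n → ℤ := fun x =>
  Fc p ξ (-(rho p ξ s x)) g ((φ (rho p ξ s x))⁻¹ x)
    - Gz p (s.1 * s.2⁻¹) (-(rho p ξ s x)) g

variable (hφ : ∀ a b : Ap p, φ (a + b) = φ a * φ b)
  (hξ : ∀ (a : Ap p) (x : Fin n), ξ ((φ a)⁻¹ x) = ξ x - a)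

include hφ

include hξ in
lemma fM_cyclic_coboundary (s : Ap p) :
    ∃ c : Ap p → (GMod.Mn n).carrier,
      ∀ a ∈ AddSubgroup.zmultiples s, ∀ b ∈ AddSubgroup.zmultiples s,
        fM p ξ a b = φ a • c b - c (a + b) + c a := by
  by_cases hs2 : s.2 = 0
  · -- the easy line: second coordinates vanish
    refine ⟨0, fun a ha b hb => ?_⟩
    have hsnd : ∀ u : Ap p, u ∈ AddSubgroup.zmultiples s → u.2 = 0 := by
      intro u hu
      obtain ⟨z, rfl⟩ := AddSubgroup.mem_zmultiples_iff.mp hu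
      show z • s.2 = 0
      rw [hs2, smul_zero]
    have hF : Fc p ξ a b = 0 := by
      funext x
      unfold Fc
      rw [hsnd a ha, hsnd b hb, carry_zero_zero, ZMod.val_zero]
      simp
    show fM p ξ a b = φ a • (0 : (GMod.Mn n).carrier) - 0 + 0
    rw [smul_zero]
    unfold fM
    rw [hF, map_zero]
    abel
  · -- the interesting line: use the contracting homotopy
    set t : ZMod p := s.1 * s.2⁻¹ with ht
    have hLrel : ∀ u : Ap p, u ∈ AddSubgroup.zmultiples s → Lrel p t u := by
      intro u hu
      obtain ⟨z, rfl⟩ := AddSubgroup.mem_zmultiples_iff.mp hu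
      show z • s.1 = t * (z • s.2)
      rw [zsmul_eq_mul, zsmul_eq_mul, ht]
      field_simp
    have hrho_rel : ∀ x : Fin n, Lrel p t (rho p ξ s x) := by
      intro x
      show ((ξ x).2 * s.2⁻¹) * s.1 = t * (((ξ x).2 * s.2⁻¹) * s.2)
      rw [ht]
      field_simp
    have hrho_transl : ∀ (a : Ap p), Lrel p t a → ∀ x : Fin n,
        rho p ξ s ((φ a)⁻¹ x) = rho p ξ s x - a := by
      intro a ha x
      unfold rho
      rw [hξ]
      have h2 : (ξ x - a).2 = (ξ x).2 - a.2 := rfl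
      rw [h2]
      have hs2' : s.2⁻¹ * s.2 = 1 := inv_mul_cancel₀ hs2
      refine Prod.ext ?_ ?_
      · show ((ξ x).2 - a.2) * s.2⁻¹ * s.1 = ((ξ x).2 * s.2⁻¹) * s.1 - a.1
        rw [ha]
        show ((ξ x).2 - a.2) * s.2⁻¹ * s.1 = ((ξ x).2 * s.2⁻¹) * s.1 - s.1 * s.2⁻¹ * a.2
        ring
      · show ((ξ x).2 - a.2) * s.2⁻¹ * s.2 = ((ξ x).2 * s.2⁻¹) * s.2 - a.2
        field_simp
    refine ⟨fun g => mkM (ct p φ ξ s g), fun a ha b hb => ?_⟩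
    have hLa := hLrel a ha
    have hLb := hLrel b hb
    -- pointwise identity for the contracting homotopy
    have key : ∀ x : Fin n,
        ct p φ ξ s b ((φ a)⁻¹ x) - ct p φ ξ s (a + b) x + ct p φ ξ s a x
          = Fc p ξ a b x - Gz p t a b := by
      intro x
      set r : Ap p := rho p ξ s x with hr
      have hLr := hrho_rel x
      have hLnr := Lrel_neg hLr
      set y : Fin n := (φ r)⁻¹ x with hy
      -- the shifted retraction
      have hshift : rho p ξ s ((φ a)⁻¹ x) = r - a := hrho_transl a hLa x
      -- the shifted evaluation point
      have hpoint : (φ (r - a))⁻¹ ((φ a)⁻¹ x) = y := by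
        have : φ a * φ (r - a) = φ r := by
          rw [← hφ]; congr 1; ring
        rw [hy, ← this]
        simp [Equiv.Perm.mul_apply]
      -- cocycle identity for `Fc` at `(-r, a, b)` and the point `y`
      have hcoc := Fc_cocycle p φ ξ hξ (-r) a b y
      have hGz := keyδG (t := t) hLnr hLa hLb
      have hback : (φ (-r))⁻¹ y = x := by
        rw [phi_neg p φ hφ, hy]
        simp
      rw [hback] at hcoc
      unfold ct
      rw [hshift, hpoint, ← hr]
      have hn1 : -(r - a) = -r + a := by ring
      rw [hn1]
      linarith [hcoc, hGz]
    rw [mkM_smul]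
    rw [← map_sub, ← map_add]
    unfold fM
    rw [mkM_eq_iff]
    refine ⟨Gz p t a b, ?_⟩
    funext x
    have hk := key x
    simp only [Pi.sub_apply, Pi.add_apply]
    linarith

end Alpha2

end SqAux



namespace SqAux

section PermModel

variable (p : ℕ) [Fact p.Prime] {ι : Type*} [Fintype ι]

lemma exponent_p (g : Ap p) : (p : ℤ) • g = 0 := by
  have h1 : (p : ℤ) • g.1 = 0 := by
    rw [zsmul_eq_mul]; push_cast; rw [ZMod.natCast_self]; ring
  have h2 : (p : ℤ) • g.2 = 0 := by
    rw [zsmul_eq_mul]; push_cast; rw [ZMod.natCast_self]; ring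
  exact Prod.ext h1 h2

variable (ψ : Ap p → Equiv.Perm ι)
variable (hψ : ∀ a b : Ap p, ψ (a + b) = ψ a * ψ b)

/-- the orbit equivalence relation of the action `ψ`. -/
def orbSetoid : Setoid ι where
  r i j := ∃ a : Ap p, ψ a i = j
  iseqv := by
    constructor
    · intro i
      exact ⟨0, by rw [phi_zero p ψ hψ]; rfl⟩
    · rintro i j ⟨a, rfl⟩
      exact ⟨-a, by rw [phi_neg p ψ hψ]; simp⟩
    · rintro i j k ⟨a, rfl⟩ ⟨b, rfl⟩
      exact ⟨b + a, by rw [hψ]; simp [Equiv.Perm.mul_apply]⟩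

include hψ

/-- orbit representatives. -/
noncomputable def orep (i : ι) : ι := (Quotient.mk (orbSetoid p ψ hψ) i).out

lemma orep_rel (i : ι) : ∃ a : Ap p, ψ a (orep p ψ hψ i) = i := by
  letI s := orbSetoid p ψ hψ
  have h : Quotient.mk s ((Quotient.mk s i).out) = Quotient.mk s i := Quotient.out_eq _
  exact Quotient.exact h

/-- connecting group elements. -/
noncomputable def osel (i : ι) : Ap p := Classical.choose (orep_rel p ψ hψ i)

lemma osel_spec (i : ι) : ψ (osel p ψ hψ i) (orep p ψ hψ i) = i :=
  Classical.choose_spec (orep_rel p ψ hψ i)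

lemma orep_apply (a : Ap p) (i : ι) : orep p ψ hψ (ψ a i) = orep p ψ hψ i := by
  letI s := orbSetoid p ψ hψ
  unfold orep
  congr 1
  exact Quotient.sound (Setoid.symm (⟨a, rfl⟩ : s.r i (ψ a i)))

lemma psi_zsmul (z : ℤ) (g : Ap p) : ψ (z • g) = (ψ g) ^ z := by
  induction z using Int.induction_on with
  | zero => rw [zero_zsmul, zpow_zero, phi_zero p ψ hψ]
  | succ k ih =>
      have h1 : ((k : ℤ) + 1) • g = (k : ℤ) • g + g := by rw [add_zsmul, one_zsmul]
      rw [h1, hψ, ih, zpow_add_one]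
  | pred k ih =>
      have h1 : (-(k : ℤ) - 1) • g = (-(k : ℤ)) • g + (-1 : ℤ) • g := by
        rw [← add_zsmul]; ring_nf
      rw [h1, hψ, ih, zpow_sub_one]
      congr 1
      rw [neg_zsmul, one_zsmul, phi_neg p ψ hψ]

lemma psi_fix_zsmul {g : Ap p} {i : ι} (hfix : ψ g i = i) (z : ℤ) :
    ψ (z • g) i = i := by
  rw [psi_zsmul p ψ hψ]
  exact (Function.IsFixedPt.perm_zpow hfix z)

/-- Degree-1 cohomology of a permutation module of `(ℤ/p)²` vanishes. -/
lemma perm_H1_vanish (ν : Ap p → ι → ℤ)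
    (hcoc : ∀ (a b : Ap p) (i : ι), ν (a + b) i = ν b ((ψ a)⁻¹ i) + ν a i) :
    ∃ w : ι → ℤ, ∀ (a : Ap p) (i : ι), ν a i = w ((ψ a)⁻¹ i) - w i := by
  have hzero : ∀ i : ι, ν 0 i = 0 := by
    intro i
    have h := hcoc 0 0 i
    rw [add_zero] at h
    have h2 : (ψ (0 : Ap p))⁻¹ i = i := by rw [phi_zero p ψ hψ]; rfl
    rw [h2] at h
    omega
  have hfixzero : ∀ (u : Ap p) (i : ι), ψ u i = i → ν u i = 0 := by
    intro u i hfix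
    have hneg : ν (-u) i = -(ν u i) := by
      have h := hcoc u (-u) i
      rw [add_neg_cancel, hzero] at h
      have h2 : (ψ u)⁻¹ i = i := Equiv.Perm.inv_eq_iff_eq.mpr hfix.symm
      rw [h2] at h
      omega
    have hlin : ∀ z : ℤ, ν (z • u) i = z * ν u i := by
      intro z
      induction z using Int.induction_on with
      | zero => rw [zero_zsmul, hzero]; ring
      | succ k ih =>
          have hsm : ((k : ℤ) + 1) • u = (k : ℤ) • u + u := by rw [add_zsmul, one_zsmul]
          have hfix2 : (ψ ((k:ℤ) • u))⁻¹ i = i :=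
            Equiv.Perm.inv_eq_iff_eq.mpr (psi_fix_zsmul p ψ hψ hfix (k : ℤ)).symm
          rw [hsm, hcoc, hfix2, ih]
          ring
      | pred k ih =>
          have hsm : (-(k : ℤ) - 1) • u = (-(k : ℤ)) • u + (-u) := by
            rw [sub_zsmul, one_zsmul]
          have hfix2 : (ψ ((-(k:ℤ)) • u))⁻¹ i = i :=
            Equiv.Perm.inv_eq_iff_eq.mpr (psi_fix_zsmul p ψ hψ hfix (-(k : ℤ))).symm
          rw [hsm, hcoc, hfix2, ih, hneg]
          ring
    have hp0 : ((p : ℤ)) • u = 0 := exponent_p p u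
    have h4 := hlin (p : ℤ)
    rw [hp0, hzero] at h4
    have hppos : (0 : ℤ) < p := by exact_mod_cast p_pos p
    have h5 : (p:ℤ) * ν u i = 0 := by linarith
    exact (mul_eq_zero.mp h5).resolve_left hppos.ne'
  set m : ι → ℤ := fun i => ν (osel p ψ hψ i) i with hm
  refine ⟨fun i => -m i, ?_⟩
  intro g i
  set j : ι := (ψ g)⁻¹ i with hj
  have hgj : ψ g j = i := by rw [hj]; simp
  have hrepj : orep p ψ hψ j = orep p ψ hψ i := by
    conv_rhs => rw [← hgj]
    rw [orep_apply]
  set u : Ap p := -osel p ψ hψ i + g + osel p ψ hψ j with hu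
  have hufix : ψ u (orep p ψ hψ i) = orep p ψ hψ i := by
    have e1 : u = -osel p ψ hψ i + (g + osel p ψ hψ j) := by rw [hu]; ring
    rw [e1, hψ, hψ]
    simp only [Equiv.Perm.mul_apply]
    rw [← hrepj, osel_spec, hgj, phi_neg p ψ hψ, hrepj]
    exact Equiv.Perm.inv_eq_iff_eq.mpr (osel_spec p ψ hψ i).symm
  have key1 : ν (g + osel p ψ hψ j) i = m j + ν g i := by
    rw [hcoc g (osel p ψ hψ j) i, ← hj]
  have key2 : ν (g + osel p ψ hψ j) i = m i := by
    have e2 : g + osel p ψ hψ j = osel p ψ hψ i + u := by rw [hu]; ring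
    rw [e2, hcoc]
    have e3 : (ψ (osel p ψ hψ i))⁻¹ i = orep p ψ hψ i :=
      Equiv.Perm.inv_eq_iff_eq.mpr (osel_spec p ψ hψ i).symm
    rw [e3, hfixzero u _ hufix, hm]
    ring
  have h9 : ν g i = m i - m j := by omega
  rw [h9]
  ring

end PermModel

end SqAux



namespace SqAux

section PermSha

variable (p : ℕ) [Fact p.Prime] {ι : Type*} [Fintype ι]
variable (ψ : Ap p → Equiv.Perm ι)
variable (hψ : ∀ a b : Ap p, ψ (a + b) = ψ a * ψ b)

include hψ in
/-- If a 2-cocycle with values in a permutation module of `(ℤ/p)²` is a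
coboundary on every cyclic subgroup, it is a coboundary. -/
lemma perm_sha2_vanish (F : Ap p → Ap p → ι → ℤ)
    (hF : ∀ (a b c : Ap p) (i : ι),
      F b c ((ψ a)⁻¹ i) + F a (b + c) i = F (a + b) c i + F a b i)
    (hrest : ∀ s : Ap p, ∃ cc : Ap p → ι → ℤ,
      ∀ a ∈ AddSubgroup.zmultiples s, ∀ b ∈ AddSubgroup.zmultiples s, ∀ i : ι,
        F a b i = cc b ((ψ a)⁻¹ i) - cc (a + b) i + cc a i) :
    ∃ c : Ap p → ι → ℤ, ∀ (a b : Ap p) (i : ι),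
      F a b i = c b ((ψ a)⁻¹ i) - c (a + b) i + c a i := by
  classical
  have hcard : ((Fintype.card (Ap p) : ℚ)) ≠ 0 := by exact_mod_cast Fintype.card_ne_zero
  -- the rational primitive by averaging
  set B : Ap p → ι → ℚ :=
    fun a i => (∑ t : Ap p, (F a t i : ℚ)) / (Fintype.card (Ap p)) with hB
  have hBprim : ∀ (a b : Ap p) (i : ι),
      (F a b i : ℚ) = B b ((ψ a)⁻¹ i) - B (a + b) i + B a i := by
    intro a b i
    have hsum : ∑ t : Ap p, ((F b t ((ψ a)⁻¹ i) : ℚ) + F a (b + t) i)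
        = ∑ t : Ap p, ((F (a + b) t i : ℚ) + F a b i) := by
      refine Finset.sum_congr rfl ?_
      intro t _
      exact_mod_cast congrArg (fun z : ℤ => (z : ℚ)) (hF a b t i)
    rw [Finset.sum_add_distrib, Finset.sum_add_distrib] at hsum
    have hre : ∑ t : Ap p, ((F a (b + t) i : ℚ)) = ∑ t : Ap p, (F a t i : ℚ) :=
      Fintype.sum_equiv (Equiv.addLeft b) _ _ (fun t => rfl)
    rw [hre] at hsum
    simp only [Finset.sum_const, Finset.card_univ, nsmul_eq_mul] at hsum
    simp only [hB]
    rw [div_sub_div_same, ← add_div, eq_div_iff hcard]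
    linarith
  -- values of `B` at fixed points are integers
  have hstep2 : ∀ (g : Ap p) (i : ι), ψ g i = i → ∃ zz : ℤ, B g i = zz := by
    intro g i hfix
    obtain ⟨cc, hcc⟩ := hrest g
    have hmem : ∀ z : ℤ, z • g ∈ AddSubgroup.zmultiples g := fun z =>
      AddSubgroup.mem_zmultiples_iff.mpr ⟨z, rfl⟩
    set D : ℤ → ℚ := fun z => B (z • g) i - ((cc (z • g) i : ℤ) : ℚ) with hD
    have hDadd : ∀ z₁ z₂ : ℤ, D (z₁ + z₂) = D z₁ + D z₂ := by
      intro z₁ z₂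
      have hfixz : (ψ (z₁ • g))⁻¹ i = i :=
        Equiv.Perm.inv_eq_iff_eq.mpr (psi_fix_zsmul p ψ hψ hfix z₁).symm
      have h1 := hBprim (z₁ • g) (z₂ • g) i
      have h2 := hcc (z₁ • g) (hmem z₁) (z₂ • g) (hmem z₂) i
      have h2q : ((F (z₁ • g) (z₂ • g) i : ℤ) : ℚ)
          = ((cc (z₂ • g) ((ψ (z₁ • g))⁻¹ i) : ℤ) : ℚ) - cc (z₁ • g + z₂ • g) i
            + cc (z₁ • g) i := by exact_mod_cast congrArg (fun z : ℤ => (z : ℚ)) h2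
      rw [hfixz] at h1 h2q
      have hzz : (z₁ + z₂) • g = z₁ • g + z₂ • g := add_zsmul g z₁ z₂
      simp only [hD, hzz]
      linarith
    have hD0 : D 0 = 0 := by
      have := hDadd 0 0
      rw [add_zero] at this
      linarith
    have hDp : D (p : ℤ) = 0 := by
      have hpg : (p : ℤ) • g = (0 : ℤ) • g := by rw [exponent_p p g, zero_zsmul]
      simp only [hD, hpg]
      simpa [hD] using hD0
    have hDlin : ∀ z : ℤ, 0 ≤ z → D z = z * D 1 := by
      intro z hz
      induction z using Int.induction_on with
      | zero => rw [hD0]; ring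
      | succ k ih =>
          have h := hDadd (k : ℤ) 1
          rw [ih (by positivity)] at h
          rw [h]; push_cast; ring
      | pred k ih => exact absurd hz (by omega)
    have := hDlin (p : ℤ) (by positivity)
    rw [hDp] at this
    have hppos : (0 : ℚ) < p := by exact_mod_cast p_pos p
    have hD1 : D 1 = 0 := by
      rcases mul_eq_zero.mp this.symm with h | h
      · exact absurd h (by exact_mod_cast hppos.ne')
      · exact h
    refine ⟨cc g i, ?_⟩
    have h1 := hD1
    simp only [hD, one_zsmul] at h1
    linarith
  -- the degree-1 correction
  set m : ι → ℚ := fun i => B (osel p ψ hψ i) i with hm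
  have hstep4 : ∀ (g : Ap p) (i : ι), ∃ zz : ℤ,
      B g i - m i + m ((ψ g)⁻¹ i) = zz := by
    intro g i
    set j : ι := (ψ g)⁻¹ i with hj
    have hgj : ψ g j = i := by rw [hj]; simp
    have hrepj : orep p ψ hψ j = orep p ψ hψ i := by
      conv_rhs => rw [← hgj]
      rw [orep_apply]
    set u : Ap p := -osel p ψ hψ i + g + osel p ψ hψ j with hu
    have hufix : ψ u (orep p ψ hψ i) = orep p ψ hψ i := by
      have e1 : u = -osel p ψ hψ i + (g + osel p ψ hψ j) := by rw [hu]; ring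
      rw [e1, hψ, hψ]
      simp only [Equiv.Perm.mul_apply]
      rw [← hrepj, osel_spec, hgj, phi_neg p ψ hψ, hrepj]
      exact Equiv.Perm.inv_eq_iff_eq.mpr (osel_spec p ψ hψ i).symm
    obtain ⟨zzu, hzzu⟩ := hstep2 u (orep p ψ hψ i) hufix
    have key1 : (F g (osel p ψ hψ j) i : ℚ)
        = m j - B (g + osel p ψ hψ j) i + B g i := by
      have h1 := hBprim g (osel p ψ hψ j) i
      rw [← hj] at h1
      rw [h1, hm]
    have key2 : (F (osel p ψ hψ i) u i : ℚ)
        = zzu - B (g + osel p ψ hψ j) i + m i := by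
      have h1 := hBprim (osel p ψ hψ i) u i
      have e3 : (ψ (osel p ψ hψ i))⁻¹ i = orep p ψ hψ i :=
        Equiv.Perm.inv_eq_iff_eq.mpr (osel_spec p ψ hψ i).symm
      rw [e3, hzzu] at h1
      have e2 : osel p ψ hψ i + u = g + osel p ψ hψ j := by rw [hu]; ring
      rw [e2] at h1
      rw [h1, hm]
    refine ⟨F g (osel p ψ hψ j) i - F (osel p ψ hψ i) u i + zzu, ?_⟩
    push_cast
    linarith
  choose zf hzf using hstep4
  refine ⟨fun g i => zf g i, ?_⟩
  intro a b i
  have hcast : ((F a b i : ℤ) : ℚ)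
      = ((zf b ((ψ a)⁻¹ i) : ℤ) : ℚ) - zf (a + b) i + zf a i := by
    have h1 := hzf b ((ψ a)⁻¹ i)
    have h2 := hzf (a + b) i
    have h3 := hzf a i
    have hcompose : (ψ b)⁻¹ ((ψ a)⁻¹ i) = (ψ (a + b))⁻¹ i := by
      rw [hψ]
      simp [Equiv.Perm.mul_apply]
    rw [hcompose] at h1
    have h0 := hBprim a b i
    linarith
  exact_mod_cast hcast

end PermSha

end SqAux



namespace SqAux

/-- Coordinates for a permutation `G`-module. -/
lemma perm_transport {G : Type u} [Group G] (W : GMod G) (hW : W.IsPermutation) :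
    ∃ (ι : Type u) (_ : Fintype ι) (fW : G →* Equiv.Perm ι) (co : W ≃+ (ι → ℤ)),
      ∀ (g : G) (w : W.carrier) (j : ι), co (g • w) j = co w ((fW g)⁻¹ j) := by
  classical
  obtain ⟨ι, hfin, b, f, hb⟩ := hW
  haveI : Fintype ι := Fintype.ofFinite ι
  refine ⟨ι, inferInstance, f, b.equivFun.toAddEquiv, ?_⟩
  intro g w j
  have hcomm : ∀ (z : ℤ) (mm : W.carrier), g • (z • mm) = z • (g • mm) := fun z mm =>
    (DistribMulAction.toAddMonoidHom W.carrier g).map_zsmul z mm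
  have key : g • w = ∑ i : ι, b.equivFun w ((f g)⁻¹ i) • b i := by
    conv_lhs => rw [← Module.Basis.sum_repr b w]
    rw [Finset.smul_sum]
    have hterm : ∀ i : ι, g • (b.repr w i • b i) = b.repr w i • b (f g i) := by
      intro i
      rw [hcomm, hb]
    rw [Finset.sum_congr rfl (fun i _ => hterm i)]
    refine Fintype.sum_equiv (f g) _ _ ?_
    intro i
    have h1 : (f g)⁻¹ (f g i) = i := by simp
    rw [h1]
    rw [Module.Basis.equivFun_apply]
  have h2 : (∑ i : ι, b.equivFun w ((f g)⁻¹ i) • b i)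
      = b.equivFun.symm (fun i => b.equivFun w ((f g)⁻¹ i)) := by
    rw [Module.Basis.equivFun_symm_apply]
  show b.equivFun (g • w) j = _
  rw [key, h2, LinearEquiv.apply_symm_apply]
  rfl

end SqAux


/-- Lemma 3: if `n = m²` is a square (`m > 1`), then for every flasque
resolution `0 → M_n → S → N → 0` of `ℤ[S_n]`-lattices the cokernel `N` is not
stably permutation (the generic norm-one torus `T_n` is not stably rational). -/
theorem square_not_stably_rational (n m : ℕ) (hm : 1 < m) (hn : n = m ^ 2)
    (S N : GMod (Equiv.Perm (Fin n)))
    (h : IsFlasqueResolution (Mn n) S N) :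
    ¬ N.IsStablyPermutation := by
  classical
  intro hsp
  obtain ⟨P, Q, hP, hQ, e, he⟩ := hsp
  obtain ⟨-, -, -, hSperm, -, i, pr, hieq, hpreq, hiinj, hprsurj, hrange⟩ := h
  -- prime setup
  set p := m.minFac with hpdef
  haveI hfact : Fact p.Prime := ⟨Nat.minFac_prime (by omega)⟩
  have hpm : p ∣ m := m.minFac_dvd
  set r := m / p with hrdef
  have hr : p * r = m := Nat.mul_div_cancel' hpm
  set k := r * r with hkdef
  have hn0 : 0 < n := by
    have := Nat.minFac_pos m
    nlinarith [hn, hm]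
  -- the coordinate system
  have hcard : Fintype.card (SqAux.Ap p × Fin k) = Fintype.card (Fin n) := by
    rw [Fintype.card_prod, Fintype.card_prod, Fintype.card_fin, ZMod.card, Fintype.card_fin]
    rw [hn, pow_two, ← hr]
    ring
  set E : (SqAux.Ap p × Fin k) ≃ Fin n := Fintype.equivOfCardEq hcard with hE
  set tA : SqAux.Ap p → Equiv.Perm (SqAux.Ap p × Fin k) :=
    fun a => Equiv.prodCongr (Equiv.addLeft a) (Equiv.refl (Fin k)) with htA
  set φ : SqAux.Ap p → Equiv.Perm (Fin n) := fun a => E.permCongr (tA a) with hφdef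
  have hφapp : ∀ (a : SqAux.Ap p) (y : SqAux.Ap p × Fin k),
      φ a (E y) = E (a + y.1, y.2) := by
    intro a y
    simp only [hφdef, htA, Equiv.permCongr_apply, Equiv.symm_apply_apply]
    rfl
  have hφ : ∀ a b : SqAux.Ap p, φ (a + b) = φ a * φ b := by
    intro a b
    ext x
    have hx : x = E (E.symm x) := (E.apply_symm_apply x).symm
    rw [hx]
    rw [Equiv.Perm.mul_apply, hφapp, hφapp, hφapp]
    rw [add_assoc]
  have hinv : ∀ (a : SqAux.Ap p) (x : Fin n),
      (φ a)⁻¹ x = E (-a + (E.symm x).1, (E.symm x).2) := by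
    intro a x
    refine Equiv.Perm.inv_eq_iff_eq.mpr ?_
    rw [hφapp]
    simp only [← add_assoc, add_neg_cancel, zero_add]
    exact (E.apply_symm_apply x).symm
  set ξ : Fin n → SqAux.Ap p := fun x => (E.symm x).1 with hξdef
  have hξ : ∀ (a : SqAux.Ap p) (x : Fin n), ξ ((φ a)⁻¹ x) = ξ x - a := by
    intro a x
    simp only [hξdef, hinv, Equiv.symm_apply_apply]
    ring
  -- the exotic cocycle and its cyclic-restriction primitives
  have hcyc := SqAux.fM_cyclic_coboundary p φ ξ hφ hξ
  -- transport `S` to coordinates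
  obtain ⟨ιS, instS, fS, coS, hcoS⟩ := SqAux.perm_transport S hSperm
  set ψS : SqAux.Ap p → Equiv.Perm ιS := fun a => fS (φ a) with hψSdef
  have hψS : ∀ a b : SqAux.Ap p, ψS (a + b) = ψS a * ψS b := by
    intro a b
    simp only [hψSdef, hφ, map_mul]
  have hFScoc : ∀ (a b c : SqAux.Ap p) (j : ιS),
      coS (i (SqAux.fM p ξ b c)) ((ψS a)⁻¹ j) + coS (i (SqAux.fM p ξ a (b + c))) j
        = coS (i (SqAux.fM p ξ (a + b) c)) j + coS (i (SqAux.fM p ξ a b)) j := by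
    intro a b c j
    have h1 : coS (i (SqAux.fM p ξ b c)) ((ψS a)⁻¹ j)
        = coS (φ a • i (SqAux.fM p ξ b c)) j := (hcoS _ _ _).symm
    rw [h1, ← hieq]
    have h2 := congrArg (fun x => coS (i x) j) (SqAux.fM_cocycle p φ ξ hξ a b c)
    simpa only [map_add, Pi.add_apply] using h2
  have hFSrest : ∀ s : SqAux.Ap p, ∃ cc : SqAux.Ap p → ιS → ℤ,
      ∀ a ∈ AddSubgroup.zmultiples s, ∀ b ∈ AddSubgroup.zmultiples s, ∀ j : ιS,
        coS (i (SqAux.fM p ξ a b)) j = cc b ((ψS a)⁻¹ j) - cc (a + b) j + cc a j := by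
    intro s
    obtain ⟨c, hc⟩ := hcyc s
    refine ⟨fun g => coS (i (c g)), fun a ha b hb j => ?_⟩
    have h1 : coS (i (c b)) ((ψS a)⁻¹ j) = coS (φ a • i (c b)) j := (hcoS _ _ _).symm
    show coS (i (SqAux.fM p ξ a b)) j
        = coS (i (c b)) ((ψS a)⁻¹ j) - coS (i (c (a + b))) j + coS (i (c a)) j
    rw [h1, ← hieq]
    have h2 := congrArg (fun x => coS (i x) j) (hc a ha b hb)
    simpa only [map_add, map_sub, Pi.add_apply, Pi.sub_apply] using h2
  obtain ⟨u, hu⟩ := SqAux.perm_sha2_vanish p ψS hψS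
    (fun a b => coS (i (SqAux.fM p ξ a b))) hFScoc hFSrest
  -- pull the primitive back to `S`
  set c1 : SqAux.Ap p → S.carrier := fun a => coS.symm (u a) with hc1
  have hc1eq : ∀ a b : SqAux.Ap p,
      i (SqAux.fM p ξ a b) = φ a • c1 b - c1 (a + b) + c1 a := by
    intro a b
    apply coS.injective
    funext j
    rw [map_add, map_sub]
    have h1 : coS (φ a • c1 b) j = coS (c1 b) ((ψS a)⁻¹ j) := hcoS _ _ _
    simp only [Pi.add_apply, Pi.sub_apply, h1]
    simp only [hc1, AddEquiv.apply_symm_apply]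
    exact hu a b j
  -- the induced 1-cocycle on `N`
  set ν : SqAux.Ap p → N.carrier := fun a => pr (c1 a) with hν
  have hνcoc : ∀ a b : SqAux.Ap p, ν (a + b) = φ a • ν b + ν a := by
    intro a b
    have h0 : pr (i (SqAux.fM p ξ a b)) = 0 := by
      have hmem : i (SqAux.fM p ξ a b) ∈ i.range := ⟨_, rfl⟩
      rw [hrange] at hmem
      exact hmem
    rw [hc1eq, map_add, map_sub, hpreq] at h0
    have h6 : ν (a + b) - (φ a • ν b + ν a)
        = -(φ a • pr (c1 b) - pr (c1 (a + b)) + pr (c1 a)) := by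
      simp only [hν]
      abel
    rw [h0, neg_zero] at h6
    exact sub_eq_zero.mp h6
  -- push into `Q` and kill it there
  obtain ⟨ιQ, instQ, fQ, coQ, hcoQ⟩ := SqAux.perm_transport Q hQ
  set ψQ : SqAux.Ap p → Equiv.Perm ιQ := fun a => fQ (φ a) with hψQdef
  have hψQ : ∀ a b : SqAux.Ap p, ψQ (a + b) = ψQ a * ψQ b := by
    intro a b
    simp only [hψQdef, hφ, map_mul]
  set νm : SqAux.Ap p → ιQ → ℤ := fun a => coQ (e (ν a, 0)) with hνm
  have hνmcoc : ∀ (a b : SqAux.Ap p) (j : ιQ),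
      νm (a + b) j = νm b ((ψQ a)⁻¹ j) + νm a j := by
    intro a b j
    have h1 : νm b ((ψQ a)⁻¹ j) = coQ (φ a • e (ν b, 0)) j := (hcoQ _ _ _).symm
    rw [h1]
    erw [← he]
    have h2 : (φ a • ((ν b, 0) : (N.prod P).carrier)) = (φ a • ν b, 0) := by
      have h2' := Prod.smul_mk (φ a) (ν b) (0 : P.carrier)
      rw [h2', smul_zero]
    erw [h2]
    have h3 : ((ν (a + b), (0 : P.carrier)) : (N.prod P).carrier)
        = ((φ a • ν b, (0 : P.carrier)) : (N.prod P).carrier) + (ν a, 0) := by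
      rw [hνcoc]
      exact Prod.ext rfl (by simp)
    simp only [hνm]
    erw [h3, map_add, map_add, Pi.add_apply]
  obtain ⟨w, hw⟩ := SqAux.perm_H1_vanish p ψQ hψQ νm hνmcoc
  -- transfer the primitive back through `e`
  set q0 : Q.carrier := coQ.symm w with hq0
  have hQprim : ∀ a : SqAux.Ap p, e (ν a, 0) = φ a • q0 - q0 := by
    intro a
    apply coQ.injective
    funext j
    rw [map_sub]
    have h1 : coQ (φ a • q0) j = coQ q0 ((ψQ a)⁻¹ j) := hcoQ _ _ _
    simp only [Pi.sub_apply, h1]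
    simp only [hq0, AddEquiv.apply_symm_apply]
    exact hw a j
  have hesymm : ∀ (g : Equiv.Perm (Fin n)) (y : Q.carrier),
      e.symm (g • y) = g • e.symm y := by
    intro g y
    apply e.injective
    rw [AddEquiv.apply_symm_apply, he, AddEquiv.apply_symm_apply]
  set w0 : (N.prod P).carrier := e.symm q0 with hw0
  have hNprim : ∀ a : SqAux.Ap p, ν a = φ a • w0.1 - w0.1 := by
    intro a
    have h1 : (ν a, (0 : P.carrier)) = φ a • w0 - w0 := by
      have := congrArg e.symm (hQprim a)
      erw [AddEquiv.symm_apply_apply] at this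
      rw [map_sub, hesymm] at this
      exact this
    have h2 := congrArg Prod.fst h1
    simp only [Prod.fst_sub, Prod.smul_fst] at h2
    exact h2
  -- lift along the surjection `pr`
  obtain ⟨s0, hs0⟩ := hprsurj w0.1
  have hker : ∀ a : SqAux.Ap p, c1 a - (φ a • s0 - s0) ∈ pr.ker := by
    intro a
    rw [AddMonoidHom.mem_ker, map_sub, map_sub, hpreq, hs0, ← hNprim]
    simp only [hν]
    exact sub_self _
  have hrange' : ∀ a : SqAux.Ap p, ∃ ma, i ma = c1 a - (φ a • s0 - s0) := by
    intro a
    have := hker a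
    rw [← hrange] at this
    exact this
  choose m0 hm0 using hrange'
  -- `fM` is a global coboundary: contradiction
  refine SqAux.fM_not_coboundary p φ ξ hφ hξ hn0 m0 ?_
  intro a b
  apply hiinj
  rw [hc1eq]
  have h1 : i (φ a • m0 b - m0 (a + b) + m0 a)
      = φ a • i (m0 b) - i (m0 (a + b)) + i (m0 a) := by
    rw [map_add, map_sub, hieq]
  rw [h1, hm0, hm0, hm0]
  have h2 : φ (a + b) • s0 = φ a • (φ b • s0) := by rw [hφ, mul_smul]
  rw [smul_sub, smul_sub, h2]
  abel
end

section
/- (Saltman, Snider) If n > 1 is divisible by the square of some integer m > 1, then for every flasque resolution 0 → M_n → S → N → 0 of ℤ[S_n]-lattices, the cokernel N is not stably permutation. (Algebraic form of: the generic norm-one torus T_n is not stably rational when n is divisible by a square.) -/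
/-! Preliminaries: a lightweight theory of `G`-modules (abelian groups with a
distributive `G`-action, i.e. `ℤ[G]`-modules), lattices, permutation modules,
flasque modules and flasque resolutions, the norm-one-torus character lattice
`Mn n` over the symmetric group `S_n`, and low-degree group cohomology with
the invariant `Ш²_ω`. -/

open Equiv

universe u

open GMod


namespace SSAux

variable {G : Type} [Group G] {X : Type}

/-- Orbit setoid of an action given by `f : G →* Perm X`. -/
def orbSetoid (f : G →* Equiv.Perm X) : Setoid X where
  r x y := ∃ g : G, f g x = y
  iseqv := by
    refine ⟨fun x => ⟨1, by simp⟩, ?_, ?_⟩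
    · rintro x y ⟨g, hg⟩
      exact ⟨g⁻¹, by rw [← hg]; simp⟩
    · rintro x y z ⟨g, hg⟩ ⟨h, hh⟩
      exact ⟨h * g, by rw [map_mul]; simp [Equiv.Perm.mul_apply, hg, hh]⟩

noncomputable def orbRep (f : G →* Equiv.Perm X) (x : X) : X :=
  (Quotient.mk (orbSetoid f) x).out

lemma orbRep_spec (f : G →* Equiv.Perm X) (x : X) : ∃ g : G, f g (orbRep f x) = x :=
  Quotient.mk_out (s := orbSetoid f) x

lemma orbRep_apply (f : G →* Equiv.Perm X) (g : G) (x : X) :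
    orbRep f (f g x) = orbRep f x := by
  unfold orbRep
  congr 1
  exact Quotient.sound ((orbSetoid f).iseqv.symm ⟨g, rfl⟩)

noncomputable def sec (f : G →* Equiv.Perm X) (x : X) : G :=
  Classical.choose (orbRep_spec f x)

lemma sec_spec (f : G →* Equiv.Perm X) (x : X) : f (sec f x) (orbRep f x) = x :=
  Classical.choose_spec (orbRep_spec f x)

/-- `Ш¹` vanishing for "permutation-with-coefficients" modules:
a 1-cocycle whose values vanish at fixed points is a coboundary. -/
theorem sha1_vanish {A : Type} [AddCommGroup A] (f : G →* Equiv.Perm X)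
    (α : G → X → A)
    (hco : ∀ g h i, α (g * h) i = α h ((f g)⁻¹ i) + α g i)
    (hP1 : ∀ g i, f g i = i → α g i = 0) :
    ∃ m : X → A, ∀ g i, α g i = m ((f g)⁻¹ i) - m i := by
  refine ⟨fun x => - α (sec f x) x, fun g i => ?_⟩
  set y := (f g)⁻¹ i with hy
  set a := sec f i with ha
  set a' := sec f y with ha'
  set r := orbRep f i with hr
  have hry : orbRep f y = r := by
    rw [hy, hr]
    have : (f g)⁻¹ i = f g⁻¹ i := by rw [map_inv]
    rw [this, orbRep_apply]
  have har : f a r = i := sec_spec f i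
  have ha'r : f a' r = y := by rw [← hry]; exact sec_spec f y
  -- h stabilizes r
  set hh := a⁻¹ * g * a' with hhh
  have hstab : f hh r = r := by
    have h1 : f g y = i := by rw [hy]; simp
    rw [hhh, map_mul, map_mul, Equiv.Perm.mul_apply, Equiv.Perm.mul_apply, ha'r, h1, map_inv,
      ← har]
    simp
  have hzero : α hh r = 0 := hP1 hh r hstab
  have key1 : α (a * hh) i = α a i := by
    rw [hco]
    have : (f a)⁻¹ i = r := by rw [← har]; simp
    rw [this, hzero, zero_add]
  have key2 : α (g * a') i = α a' y + α g i := by rw [hco, ← hy]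
  have heq : a * hh = g * a' := by rw [hhh]; group
  rw [heq] at key1
  rw [key2] at key1
  -- key1 : α a' y + α g i = α a i
  have hfin : α g i = α a i - α a' y := by
    rw [← key1]; abel
  simp only []
  rw [hfin, ← ha, ← ha']
  abel



lemma cocycle1_one {A : Type} [AddCommGroup A] (f : G →* Equiv.Perm X)
    (α : G → X → A)
    (hco : ∀ g h i, α (g * h) i = α h ((f g)⁻¹ i) + α g i) :
    ∀ i, α 1 i = 0 := by
  intro i
  have := hco 1 1 i
  simp at this
  exact this

/-- `H¹` vanishing for permutation modules with `ℤ` coefficients. -/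
theorem h1_perm_vanish [Finite G] (f : G →* Equiv.Perm X)
    (α : G → X → ℤ)
    (hco : ∀ g h i, α (g * h) i = α h ((f g)⁻¹ i) + α g i) :
    ∃ m : X → ℤ, ∀ g i, α g i = m ((f g)⁻¹ i) - m i := by
  apply sha1_vanish f α hco
  intro g i hfix
  have hinv : ((f g)⁻¹ : Equiv.Perm X) i = i := by
    conv_lhs => rw [← hfix]
    simp
  have hpow : ∀ k : ℕ, α (g ^ k) i = (k : ℤ) * α g i := by
    intro k
    induction k with
    | zero => simpa using cocycle1_one f α hco i
    | succ k ih =>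
      have : g ^ (k+1) = g * g ^ k := by rw [pow_succ'];
      rw [this, hco, hinv, ih]
      push_cast; ring
  have h0 := hpow (orderOf g)
  rw [pow_orderOf_eq_one, cocycle1_one f α hco i] at h0
  have hne : (orderOf g : ℤ) ≠ 0 := by
    exact_mod_cast (orderOf_pos g).ne'
  have := h0.symm
  rcases mul_eq_zero.mp this with h | h
  · exact absurd h hne
  · exact h

/-- Explicit contraction in degree 2 for a free permutation action. -/
theorem free_contraction2 (f : G →* Equiv.Perm X)
    (hfree : ∀ g x, f g x = x → g = 1)
    (ν : G → G → X → ℤ)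
    (hco : ∀ g h k x, ν h k ((f g)⁻¹ x) - ν (g*h) k x + ν g (h*k) x - ν g h x = 0) :
    ∃ η : G → X → ℤ, ∀ g h x,
      ν g h x = η h ((f g)⁻¹ x) - η (g*h) x + η g x := by
  have seceq : ∀ g x, sec f ((f g)⁻¹ x) = g⁻¹ * sec f x := by
    intro g x
    have hr : orbRep f ((f g)⁻¹ x) = orbRep f x := by
      have : (f g)⁻¹ x = f g⁻¹ x := by rw [map_inv]
      rw [this, orbRep_apply]
    have h1 : f (sec f ((f g)⁻¹ x)) (orbRep f x) = (f g)⁻¹ x := by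
      rw [← hr]; exact sec_spec f _
    have h2 : f (g⁻¹ * sec f x) (orbRep f x) = (f g)⁻¹ x := by
      rw [map_mul, Equiv.Perm.mul_apply, sec_spec, map_inv]
    -- freeness: the two group elements agree
    have h3 : f ((g⁻¹ * sec f x)⁻¹ * sec f ((f g)⁻¹ x)) (orbRep f x) = orbRep f x := by
      rw [map_mul, Equiv.Perm.mul_apply, h1, map_inv, ← h2]
      simp
    have := hfree _ _ h3
    exact (inv_mul_eq_one.mp this).symm
  refine ⟨fun g x => ν g (g⁻¹ * sec f x) x, fun g h x => ?_⟩
  set s := sec f x with hs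
  set y := (f g)⁻¹ x with hy
  have hsy : sec f y = g⁻¹ * s := seceq g x
  set k := h⁻¹ * (g⁻¹ * s) with hk
  have e1 : h⁻¹ * sec f y = k := by rw [hsy]
  have e2 : h * k = g⁻¹ * s := by rw [hk]; group
  have e3 : (g*h)⁻¹ * s = k := by rw [hk]; group
  have hcc := hco g h k x
  -- ν h k y - ν (g*h) k x + ν g (h*k) x - ν g h x = 0
  simp only []
  rw [e1, e3]
  rw [← hy, e2] at hcc
  -- goal: ν g h x = ν h k y - ν (g*h) k x + ν g (g⁻¹*s) x
  rw [← hs]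
  omega





theorem sha2_perm_vanish {G : Type} [CommGroup G] [Fintype G] {X : Type}
    (f : G →* Equiv.Perm X)
    (c : G → G → X → ℤ)
    (hco : ∀ g h k i, c h k ((f g)⁻¹ i) + c g (h*k) i = c (g*h) k i + c g h i)
    (hcyc : ∀ w : G, ∃ β : Subgroup.zpowers w → X → ℤ,
      ∀ (γ δ : Subgroup.zpowers w) (i : X),
        c ↑γ ↑δ i = β δ ((f ↑γ)⁻¹ i) - β (γ*δ) i + β γ i) :
    ∃ b : G → X → ℤ, ∀ g h i, c g h i = b h ((f g)⁻¹ i) - b (g*h) i + b g i := by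
  classical
  set n := Fintype.card G with hn
  have hnpos : 0 < n := Fintype.card_pos
  haveI : NeZero n := ⟨hnpos.ne'⟩
  set B : G → X → ℤ := fun g i => ∑ h : G, c g h i with hB
  -- the norm identity  dB = n • c
  have hdB : ∀ g h i, B h ((f g)⁻¹ i) - B (g*h) i + B g i = n * c g h i := by
    intro g h i
    have h1 : ∑ k : G, (c h k ((f g)⁻¹ i) + c g (h*k) i)
        = ∑ k : G, (c (g*h) k i + c g h i) := by
      apply Finset.sum_congr rfl
      intro k _
      exact hco g h k i
    rw [Finset.sum_add_distrib, Finset.sum_add_distrib] at h1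
    have h2 : ∑ k : G, c g (h*k) i = B g i := by
      rw [hB]
      exact Fintype.sum_equiv (Equiv.mulLeft h) _ _ (fun k => rfl)
    have h3 : ∑ _k : G, (c g h i) = (n : ℤ) * c g h i := by
      rw [Finset.sum_const, Finset.card_univ, ← hn, nsmul_eq_mul]
    rw [h2, h3] at h1
    simp only [hB] at h1 ⊢
    omega
  -- mod-n reduction
  set βb : G → X → ZMod n := fun g i => ((B g i : ℤ) : ZMod n) with hβb
  have hβco : ∀ g h i, βb (g*h) i = βb h ((f g)⁻¹ i) + βb g i := by
    intro g h i
    have h4 : B (g*h) i = B h ((f g)⁻¹ i) + B g i - n * c g h i := by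
      have := hdB g h i; omega
    rw [hβb]
    simp only
    rw [h4]
    push_cast
    simp
  -- fixed-point vanishing of βb
  have hP1 : ∀ g i, f g i = i → βb g i = 0 := by
    intro g i hfix
    set C := Subgroup.zpowers g with hC
    haveI : Fintype C := Fintype.ofFinite _
    haveI : Fintype (G ⧸ C) := Fintype.ofFinite _
    obtain ⟨β, hβ⟩ := hcyc g
    set gC : C := ⟨g, Subgroup.mem_zpowers g⟩ with hgC
    set y := ((f g)⁻¹ i) with hy
    have hyi : y = i := by rw [hy]; nth_rewrite 1 [← hfix]; simp
    set σ : X → ℤ := fun x => ∑ γ : C, β γ x with hσ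
    set BC : X → ℤ := fun x => ∑ γ : C, c g ↑γ x with hBC
    -- step c
    have hstepc : BC i = σ y - σ i + (Fintype.card C : ℤ) * β gC i := by
      have h1 : BC i = ∑ γ : C, (β γ y - β (gC * γ) i + β gC i) := by
        apply Finset.sum_congr rfl
        intro γ _
        exact hβ gC γ i
      have h2 : ∑ γ : C, β (gC * γ) i = σ i := by
        rw [hσ]
        exact Fintype.sum_equiv (Equiv.mulLeft gC) _ _ (fun γ => rfl)
      have h3 : ∑ _γ : C, β gC i = (Fintype.card C : ℤ) * β gC i := by
        rw [Finset.sum_const, Finset.card_univ, nsmul_eq_mul]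
      rw [Finset.sum_add_distrib, Finset.sum_sub_distrib, h2, h3] at h1
      rw [h1, hσ]
    -- coset decomposition
    set e : C × (G ⧸ C) → G := fun p => ↑p.1 * (Quotient.out p.2) with he
    have hmk : ∀ (γ : C) (q : G ⧸ C), (QuotientGroup.mk (e (γ, q)) : G ⧸ C) = q := by
      intro γ q
      have h1 : ((↑γ * Quotient.out q)⁻¹ * Quotient.out q : G) = (↑γ)⁻¹ := by
        rw [mul_inv_rev, mul_assoc, mul_comm ((γ:G))⁻¹ (Quotient.out q), ← mul_assoc]
        simp
      have h2 : (QuotientGroup.mk (e (γ, q)) : G ⧸ C) = QuotientGroup.mk (Quotient.out q) :=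
        QuotientGroup.eq.mpr (by rw [h1]; exact C.inv_mem γ.2)
      rw [h2, QuotientGroup.out_eq']
    have hebij : Function.Bijective e := by
      constructor
      · rintro ⟨γ, q⟩ ⟨γ', q'⟩ hpq
        have hq : q = q' := by rw [← hmk γ q, ← hmk γ' q', hpq]
        have hγ : (γ : G) = γ' := by
          have := hpq
          rw [he] at this
          simp only at this
          rw [hq] at this
          exact mul_right_cancel this
        exact Prod.ext (Subtype.ext hγ) hq
      · intro v
        set q : G ⧸ C := QuotientGroup.mk v with hq
        have hmem : (Quotient.out q)⁻¹ * v ∈ C := by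
          apply QuotientGroup.eq.mp
          rw [QuotientGroup.out_eq', hq]
        refine ⟨⟨⟨(Quotient.out q)⁻¹ * v, hmem⟩, q⟩, ?_⟩
        rw [he]
        simp only
        rw [mul_comm]
        group
    -- the rearrangement identity
    have hrearr : ∀ (γ : C) (t : G),
        c g (↑γ * t) i = c g ↑γ i + c (g * ↑γ) t i - c ↑γ t y := by
      intro γ t
      have := hco g (↑γ) t i
      rw [← hy] at this
      omega
    set D : X → ℤ := fun x => ∑ p : C × (G ⧸ C), c ↑p.1 (Quotient.out p.2) x with hD
    have hstepd : B g i = (Fintype.card (G ⧸ C) : ℤ) * BC i + D i - D y := by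
      have h1 : B g i = ∑ p : C × (G ⧸ C), c g (e p) i :=
        (Fintype.sum_bijective e hebij _ _ (fun p => rfl)).symm
      have h2 : ∀ p : C × (G ⧸ C), c g (e p) i
          = c g ↑p.1 i + c (g * ↑p.1) (Quotient.out p.2) i - c ↑p.1 (Quotient.out p.2) y := by
        intro p
        exact hrearr p.1 (Quotient.out p.2)
      rw [h1, Finset.sum_congr rfl (fun p _ => h2 p)]
      rw [Finset.sum_sub_distrib, Finset.sum_add_distrib]
      have h3 : ∑ p : C × (G ⧸ C), c g ↑p.1 i = (Fintype.card (G ⧸ C) : ℤ) * BC i := by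
        rw [Fintype.sum_prod_type_right, hBC]
        simp only
        rw [Finset.sum_const, Finset.card_univ, nsmul_eq_mul]
      have h4 : ∑ p : C × (G ⧸ C), c (g * ↑p.1) (Quotient.out p.2) i = D i := by
        rw [hD]
        apply Fintype.sum_equiv (Equiv.prodCongr (Equiv.mulLeft gC) (Equiv.refl _))
        rintro ⟨γ, q⟩
        rfl
      have h5 : ∑ p : C × (G ⧸ C), c ↑p.1 (Quotient.out p.2) y = D y := rfl
      rw [h3, h4, h5]
    -- combine and reduce mod n
    have hcard : (Fintype.card (G ⧸ C)) * (Fintype.card C) = n := by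
      rw [hn, ← Nat.card_eq_fintype_card, ← Nat.card_eq_fintype_card,
        ← Nat.card_eq_fintype_card]
      exact (Subgroup.card_eq_card_quotient_mul_card_subgroup (s := C)).symm
    set u : X → ZMod n := fun x => (((Fintype.card (G ⧸ C) : ℤ) * σ x - D x : ℤ) : ZMod n)
      with hu
    have hfinal : βb g i = u y - u i := by
      have h5 : B g i = ((Fintype.card (G ⧸ C) : ℤ) * σ y - D y)
          - ((Fintype.card (G ⧸ C) : ℤ) * σ i - D i)
          + ((Fintype.card (G ⧸ C) : ℤ) * (Fintype.card C : ℤ)) * β gC i := by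
        rw [hstepd, hstepc]; ring
      rw [hβb, hu]
      simp only
      rw [h5]
      have h6 : ((Fintype.card (G ⧸ C) : ℤ) * (Fintype.card C : ℤ)) = (n : ℤ) := by
        exact_mod_cast congrArg (Nat.cast : ℕ → ℤ) hcard
      rw [h6]
      push_cast
      simp
    rw [hfinal, hyi]
    simp
  -- apply the Ш¹ vanishing over ZMod n
  obtain ⟨mbar, hmbar⟩ := sha1_vanish f βb hβco hP1
  set m : X → ℤ := fun i => ((mbar i).val : ℤ) with hm
  have hmcast : ∀ i, ((m i : ℤ) : ZMod n) = mbar i := by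
    intro i
    rw [hm]
    simp [ZMod.natCast_val, ZMod.cast_id]
  have hdvd : ∀ g i, (n : ℤ) ∣ (B g i - m ((f g)⁻¹ i) + m i) := by
    intro g i
    rw [← ZMod.intCast_zmod_eq_zero_iff_dvd]
    push_cast
    rw [hmcast, hmcast]
    have := hmbar g i
    rw [hβb] at this
    simp only at this
    rw [this]
    ring
  set b : G → X → ℤ := fun g i => (B g i - m ((f g)⁻¹ i) + m i) / n with hb
  have hbn : ∀ g i, (n : ℤ) * b g i = B g i - m ((f g)⁻¹ i) + m i := by
    intro g i
    rw [hb]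
    exact Int.mul_ediv_cancel' (hdvd g i)
  refine ⟨b, fun g h i => ?_⟩
  have hcancel : (n : ℤ) * c g h i = (n : ℤ) * (b h ((f g)⁻¹ i) - b (g*h) i + b g i) := by
    rw [mul_add, mul_sub, hbn, hbn, hbn]
    have hperm : ((f h)⁻¹ ((f g)⁻¹ i)) = ((f (g*h))⁻¹ i) := by
      rw [map_mul, mul_inv_rev]
      rfl
    rw [hperm, ← hdB g h i]
    ring
  have hnne : (n : ℤ) ≠ 0 := by exact_mod_cast hnpos.ne'
  exact mul_left_cancel₀ hnne hcancel

section Transport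

variable {G' : Type} [Group G']

/-- Equivariance of basis coordinates for a permuted basis. -/
theorem perm_equivFun {M : GMod G'} {ι : Type} [Fintype ι]
    (b : Module.Basis ι ℤ M.carrier) (f : G' →* Equiv.Perm ι)
    (hbf : ∀ g i, g • b i = b (f g i)) (g : G') (m : M.carrier) :
    ∀ i, b.equivFun (g • m) i = b.equivFun m ((f g)⁻¹ i) := by
  classical
  set φg := DistribMulAction.toAddMonoidHom M.carrier g with hφg
  have hsm : g • m = b.equivFun.symm (fun i => b.equivFun m ((f g)⁻¹ i)) := by
    have h0 : g • m = φg m := rfl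
    have hrepr : m = ∑ j, b.equivFun m j • b j := by
      conv_lhs => rw [← b.sum_equivFun m]
    rw [h0]
    conv_lhs => rw [hrepr]
    rw [map_sum]
    have h1 : ∀ j, φg (b.equivFun m j • b j) = b.equivFun m j • b (f g j) := by
      intro j
      rw [AddMonoidHom.map_zsmul]
      have : φg (b j) = g • b j := rfl
      rw [this, hbf]
    rw [Finset.sum_congr rfl (fun j _ => h1 j)]
    rw [Module.Basis.equivFun_symm_apply]
    apply Fintype.sum_equiv (f g)
    intro j
    congr 1
    simp
  intro i
  rw [hsm, LinearEquiv.apply_symm_apply]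

/-- A direct sum of permutation modules is permutation. -/
theorem perm_prod {S P : GMod G'} (hS : S.IsPermutation) (hP : P.IsPermutation) :
    (S.prod P).IsPermutation := by
  obtain ⟨ι, hι, b, f, hbf⟩ := hS
  obtain ⟨κ, hκ, b', f', hbf'⟩ := hP
  refine ⟨ι ⊕ κ, by exact inferInstance, b.prod b',
    (Equiv.Perm.sumCongrHom ι κ).comp (f.prod f'), ?_⟩
  intro g i
  cases i with
  | inl i =>
    have h2 : ((Equiv.Perm.sumCongrHom ι κ).comp (f.prod f')) g (Sum.inl i)
        = Sum.inl (f g i) := rfl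
    rw [h2]
    refine Prod.ext ?_ ?_
    · calc (g • (b.prod b') (Sum.inl i)).1
          = g • ((b.prod b') (Sum.inl i)).1 := rfl
        _ = g • b i := by rw [Module.Basis.prod_apply_inl_fst]
        _ = b (f g i) := hbf g i
        _ = ((b.prod b') (Sum.inl (f g i))).1 := (Module.Basis.prod_apply_inl_fst b b' _).symm
    · calc (g • (b.prod b') (Sum.inl i)).2
          = g • ((b.prod b') (Sum.inl i)).2 := rfl
        _ = g • (0 : P.carrier) := by rw [Module.Basis.prod_apply_inl_snd]
        _ = 0 := smul_zero g
        _ = ((b.prod b') (Sum.inl (f g i))).2 := (Module.Basis.prod_apply_inl_snd b b' _).symm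
  | inr j =>
    have h2 : ((Equiv.Perm.sumCongrHom ι κ).comp (f.prod f')) g (Sum.inr j)
        = Sum.inr (f' g j) := rfl
    rw [h2]
    refine Prod.ext ?_ ?_
    · calc (g • (b.prod b') (Sum.inr j)).1
          = g • ((b.prod b') (Sum.inr j)).1 := rfl
        _ = g • (0 : S.carrier) := by rw [Module.Basis.prod_apply_inr_fst]
        _ = 0 := smul_zero g
        _ = ((b.prod b') (Sum.inr (f' g j))).1 := (Module.Basis.prod_apply_inr_fst b b' _).symm
    · calc (g • (b.prod b') (Sum.inr j)).2
          = g • ((b.prod b') (Sum.inr j)).2 := rfl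
        _ = g • b' j := by rw [Module.Basis.prod_apply_inr_snd]
        _ = b' (f' g j) := hbf' g j
        _ = ((b.prod b') (Sum.inr (f' g j))).2 := (Module.Basis.prod_apply_inr_snd b b' _).symm

variable {W : Type} [CommGroup W] [Fintype W]

/-- Abstract Ш² vanishing for a permutation module, for the `φ`-twisted action. -/
theorem perm_sha2_abstract {T : GMod G'} (hT : T.IsPermutation) (φ : W →* G')
    (cc : W → W → T.carrier)
    (hco : ∀ g h k, φ g • cc h k + cc g (h*k) = cc (g*h) k + cc g h)
    (hcyc : ∀ w : W, ∃ β : Subgroup.zpowers w → T.carrier,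
        ∀ γ δ : Subgroup.zpowers w, cc ↑γ ↑δ = φ ↑γ • β δ - β (γ*δ) + β γ) :
    ∃ b : W → T.carrier, ∀ g h, cc g h = φ g • b h - b (g*h) + b g := by
  classical
  obtain ⟨ι, hι, bb, f, hbf⟩ := hT
  haveI : Fintype ι := Fintype.ofFinite ι
  set e := bb.equivFun with he
  set fW : W →* Equiv.Perm ι := f.comp φ with hfW
  have hkey : ∀ (g : W) (m : T.carrier) (i : ι), e (φ g • m) i = e m ((fW g)⁻¹ i) :=
    fun g m i => perm_equivFun bb f hbf (φ g) m i
  set c' : W → W → ι → ℤ := fun g h i => e (cc g h) i with hc'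
  have hco' : ∀ g h k i, c' h k ((fW g)⁻¹ i) + c' g (h*k) i = c' (g*h) k i + c' g h i := by
    intro g h k i
    have h1 := congrArg (fun v => e v i) (hco g h k)
    simp only [map_add, Pi.add_apply] at h1
    rw [hkey g (cc h k) i] at h1
    exact h1
  have hcyc' : ∀ w : W, ∃ β : Subgroup.zpowers w → ι → ℤ,
      ∀ (γ δ : Subgroup.zpowers w) (i : ι),
        c' ↑γ ↑δ i = β δ ((fW ↑γ)⁻¹ i) - β (γ*δ) i + β γ i := by
    intro w
    obtain ⟨β, hβ⟩ := hcyc w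
    refine ⟨fun γ i => e (β γ) i, fun γ δ i => ?_⟩
    have h1 := congrArg (fun v => e v i) (hβ γ δ)
    simp only [map_add, map_sub, Pi.add_apply, Pi.sub_apply] at h1
    rw [hkey (↑γ) (β δ) i] at h1
    exact h1
  obtain ⟨bm, hbm⟩ := sha2_perm_vanish fW c' hco' hcyc'
  refine ⟨fun g => e.symm (bm g), fun g h => ?_⟩
  apply e.injective
  ext i
  have h1 : e (cc g h) i = c' g h i := rfl
  rw [map_add, map_sub]
  have h2 : e (φ g • e.symm (bm h)) i = bm h ((fW g)⁻¹ i) := by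
    rw [hkey g (e.symm (bm h)) i, LinearEquiv.apply_symm_apply]
  simp only [Pi.add_apply, Pi.sub_apply]
  rw [h1, h2, LinearEquiv.apply_symm_apply, LinearEquiv.apply_symm_apply, hbm]

/-- Abstract `H¹` vanishing for a permutation module, for the `φ`-twisted action. -/
theorem perm_h1_abstract {Q : GMod G'} (hQ : Q.IsPermutation) (φ : W →* G')
    (α : W → Q.carrier)
    (hco : ∀ g h, α (g*h) = φ g • α h + α g) :
    ∃ z : Q.carrier, ∀ g, α g = φ g • z - z := by
  classical
  obtain ⟨ι, hι, bb, f, hbf⟩ := hQ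
  haveI : Fintype ι := Fintype.ofFinite ι
  set e := bb.equivFun with he
  set fW : W →* Equiv.Perm ι := f.comp φ with hfW
  have hkey : ∀ (g : W) (m : Q.carrier) (i : ι), e (φ g • m) i = e m ((fW g)⁻¹ i) :=
    fun g m i => perm_equivFun bb f hbf (φ g) m i
  set α' : W → ι → ℤ := fun g i => e (α g) i with hα'
  have hco' : ∀ g h i, α' (g*h) i = α' h ((fW g)⁻¹ i) + α' g i := by
    intro g h i
    have h1 := congrArg (fun v => e v i) (hco g h)
    simp only [map_add, Pi.add_apply] at h1
    rw [hkey g (α h) i] at h1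
    exact h1
  obtain ⟨mm, hmm⟩ := h1_perm_vanish fW α' hco'
  refine ⟨e.symm mm, fun g => ?_⟩
  apply e.injective
  ext i
  rw [map_sub]
  have h2 : e (φ g • e.symm mm) i = mm ((fW g)⁻¹ i) := by
    rw [hkey g (e.symm mm) i, LinearEquiv.apply_symm_apply]
  simp only [Pi.sub_apply]
  rw [h2, LinearEquiv.apply_symm_apply]
  exact hmm g i

end Transport

section ZArith

variable (p : ℕ) [NeZero p]
set_option linter.unusedSectionVars false

abbrev Wg := Multiplicative (ZMod p × ZMod p)

def Aw (w : Wg p) : ℤ := ((Multiplicative.toAdd w).1.val : ℤ)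

def Bw (w : Wg p) : ℤ := ((Multiplicative.toAdd w).2.val : ℤ)

lemma castA (w : Wg p) : ((Aw p w : ℤ) : ZMod p) = (Multiplicative.toAdd w).1 := by
  unfold Aw
  push_cast
  simp [ZMod.natCast_val, ZMod.cast_id]

lemma castB (w : Wg p) : ((Bw p w : ℤ) : ZMod p) = (Multiplicative.toAdd w).2 := by
  unfold Bw
  push_cast
  simp [ZMod.natCast_val, ZMod.cast_id]

lemma toAdd_mul' (a b : Wg p) :
    Multiplicative.toAdd (a * b) = Multiplicative.toAdd a + Multiplicative.toAdd b := rfl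

def epsA (a b : Wg p) : ℤ := (Aw p a + Aw p b - Aw p (a*b)) / p

def epsB (a b : Wg p) : ℤ := (Bw p a + Bw p b - Bw p (a*b)) / p

lemma hdvdA (a b : Wg p) : (p:ℤ) ∣ (Aw p a + Aw p b - Aw p (a*b)) := by
  rw [← ZMod.intCast_zmod_eq_zero_iff_dvd]
  push_cast
  rw [castA, castA, castA, toAdd_mul']
  simp

lemma hdvdB (a b : Wg p) : (p:ℤ) ∣ (Bw p a + Bw p b - Bw p (a*b)) := by
  rw [← ZMod.intCast_zmod_eq_zero_iff_dvd]
  push_cast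
  rw [castB, castB, castB, toAdd_mul']
  simp

lemma hepsA (a b : Wg p) : (p:ℤ) * epsA p a b = Aw p a + Aw p b - Aw p (a*b) :=
  Int.mul_ediv_cancel' (hdvdA p a b)

lemma hepsB (a b : Wg p) : (p:ℤ) * epsB p a b = Bw p a + Bw p b - Bw p (a*b) :=
  Int.mul_ediv_cancel' (hdvdB p a b)

noncomputable def omg (a b : Wg p) : ℚ := ((Bw p a * Aw p b : ℤ) : ℚ) / p

def zInt (a b c : Wg p) : ℤ := Aw p c * epsB p a b - Bw p a * epsA p b c

lemma hzQ (a b c : Wg p) :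
    ((zInt p a b c : ℤ) : ℚ) = omg p b c - omg p (a*b) c + omg p a (b*c) - omg p a b := by
  have hp0 : (p:ℚ) ≠ 0 := by
    exact_mod_cast (NeZero.ne p)
  have hA : (p:ℚ) * (epsA p b c : ℚ) = (Aw p b : ℚ) + (Aw p c : ℚ) - (Aw p (b*c) : ℚ) := by
    exact_mod_cast hepsA p b c
  have hB : (p:ℚ) * (epsB p a b : ℚ) = (Bw p a : ℚ) + (Bw p b : ℚ) - (Bw p (a*b) : ℚ) := by
    exact_mod_cast hepsB p a b
  unfold zInt omg
  field_simp
  push_cast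
  linear_combination (Aw p c : ℚ) * hB - (Bw p a : ℚ) * hA

lemma hzco (a b c d : Wg p) :
    zInt p b c d - zInt p (a*b) c d + zInt p a (b*c) d - zInt p a b (c*d) + zInt p a b c = 0 := by
  have : ((zInt p b c d - zInt p (a*b) c d + zInt p a (b*c) d - zInt p a b (c*d)
      + zInt p a b c : ℤ) : ℚ) = 0 := by
    push_cast [hzQ]
    simp only [mul_assoc]
    ring
  exact_mod_cast this

end ZArith

section Geometry

variable (p n k : ℕ) [NeZero p]
set_option linter.unusedSectionVars false

variable (E : Fin n ≃ (Wg p) × Fin k)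

/-- The free `W`-action on `Fin n` through the identification `E`. -/
def phiW : Wg p →* Equiv.Perm (Fin n) where
  toFun w := (E.trans ((Equiv.mulLeft w).prodCongr (Equiv.refl (Fin k)))).trans E.symm
  map_one' := by
    ext x
    simp
  map_mul' := by
    intro a b
    ext x
    simp only [Equiv.trans_apply, Equiv.Perm.mul_apply, Equiv.prodCongr_apply,
      Equiv.coe_mulLeft, Equiv.coe_refl, Equiv.apply_symm_apply]
    have hm : ∀ (w : Wg p) (q : (Wg p) × Fin k),
        Prod.map (fun y => w * y) (id : Fin k → Fin k) q = (w * q.1, q.2) := by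
      rintro w ⟨u, j⟩; rfl
    simp only [hm]
    rw [mul_assoc]

lemma phiW_apply (w : Wg p) (x : Fin n) :
    phiW p n k E w x = E.symm (w * (E x).1, (E x).2) := rfl

lemma phiW_inv_apply (w : Wg p) (x : Fin n) :
    (phiW p n k E w)⁻¹ x = E.symm (w⁻¹ * (E x).1, (E x).2) := by
  have : (phiW p n k E w)⁻¹ = phiW p n k E w⁻¹ := by
    rw [← map_inv]
  rw [this, phiW_apply]

lemma phiW_free (w : Wg p) (x : Fin n) (hfix : phiW p n k E w x = x) : w = 1 := by
  rw [phiW_apply] at hfix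
  have := congrArg (fun y => (E y).1) hfix
  simp only [Equiv.apply_symm_apply] at this
  have h1 : w * (E x).1 = 1 * (E x).1 := by rw [one_mul]; exact this
  exact mul_right_cancel h1

lemma sW_inv (w : Wg p) (x : Fin n) :
    (E ((phiW p n k E w)⁻¹ x)).1 = w⁻¹ * (E x).1 := by
  rw [phiW_inv_apply]
  simp

/-- The explicit 2-cochain on `W` with values in `Fin n → ℤ`. -/
noncomputable def muF (g h : Wg p) (x : Fin n) : ℤ :=
  - zInt p g h (h⁻¹ * (g⁻¹ * (E x).1))

/-- `d μ = z · 1`. -/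
lemma muF_d (g h kk : Wg p) (x : Fin n) :
    muF p n k E h kk ((phiW p n k E g)⁻¹ x) - muF p n k E (g*h) kk x
      + muF p n k E g (h*kk) x - muF p n k E g h x = zInt p g h kk := by
  unfold muF
  rw [sW_inv]
  set s := (E x).1 with hs
  set d := kk⁻¹ * (h⁻¹ * (g⁻¹ * s)) with hd
  have e1 : kk⁻¹ * ((g*h)⁻¹ * s) = d := by rw [hd]; group
  have e2 : (h*kk)⁻¹ * (g⁻¹ * s) = d := by rw [hd]; group
  have e3 : h⁻¹ * (g⁻¹ * s) = kk * d := by rw [hd]; group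
  rw [e1, e2, e3]
  have := hzco p g h kk d
  omega

/-- The canonical projection onto `M_n`. -/
def mkMn (v : Fin n → ℤ) : (GMod.Mn n).carrier :=
  QuotientAddGroup.mk v

/-- The 2-cocycle with values in `M_n`. -/
noncomputable def cPF (g h : Wg p) : (GMod.Mn n).carrier :=
  mkMn n (muF p n k E g h)

lemma Mn_smul_mk (σ : Equiv.Perm (Fin n)) (v : Fin n → ℤ) :
    σ • mkMn n v = mkMn n (fun x => v (σ⁻¹ x)) := rfl

lemma mkMn_add (v v' : Fin n → ℤ) : mkMn n (v + v') = mkMn n v + mkMn n v' := rfl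

lemma mkMn_surjective : Function.Surjective (mkMn n) :=
  QuotientAddGroup.mk_surjective

lemma Mn_mk_sub_mem (v v' : Fin n → ℤ) (a : ℤ) (hv : ∀ x, v x - v' x = a) :
    mkMn n v = mkMn n v' := by
  unfold mkMn
  apply QuotientAddGroup.eq_iff_sub_mem.mpr
  apply AddSubgroup.mem_zmultiples_iff.mpr
  refine ⟨a, ?_⟩
  funext x
  have : (v - v') x = v x - v' x := rfl
  rw [Pi.smul_apply, this, hv x]
  simp

lemma cPF_cocycle (g h kk : Wg p) :
    phiW p n k E g • cPF p n k E h kk + cPF p n k E g (h*kk)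
      = cPF p n k E (g*h) kk + cPF p n k E g h := by
  unfold cPF
  rw [Mn_smul_mk]
  have hL : mkMn n (fun x => muF p n k E h kk ((phiW p n k E g)⁻¹ x))
        + mkMn n (muF p n k E g (h*kk))
      = mkMn n (fun x => muF p n k E h kk ((phiW p n k E g)⁻¹ x)
          + muF p n k E g (h*kk) x) := rfl
  have hR : mkMn n (muF p n k E (g*h) kk) + mkMn n (muF p n k E g h)
      = mkMn n (fun x => muF p n k E (g*h) kk x + muF p n k E g h x) := rfl
  rw [hL, hR]
  apply Mn_mk_sub_mem (a := zInt p g h kk)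
  intro x
  have := muF_d p n k E g h kk x
  have hsub : ((fun x => muF p n k E h kk ((phiW p n k E g)⁻¹ x)
          + muF p n k E g (h*kk) x) : Fin n → ℤ) x
        - (fun x => muF p n k E (g*h) kk x + muF p n k E g h x) x
      = muF p n k E h kk ((phiW p n k E g)⁻¹ x) + muF p n k E g (h*kk) x
        - (muF p n k E (g*h) kk x + muF p n k E g h x) := rfl
  rw [hsub]
  omega

lemma cPF_cyc (hp : p.Prime) (w : Wg p) :
    ∃ β : Subgroup.zpowers w → (GMod.Mn n).carrier,
      ∀ γ δ : Subgroup.zpowers w,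
        cPF p n k E ↑γ ↑δ = phiW p n k E ↑γ • β δ - β (γ*δ) + β γ := by
  classical
  haveI : Fact p.Prime := ⟨hp⟩
  haveI : Fact (1 < p) := ⟨hp.one_lt⟩
  set C := Subgroup.zpowers w with hC
  have hdl : ∀ γ : C, ∃ i : ℤ, w ^ i = ↑γ := by
    intro γ
    exact Subgroup.mem_zpowers_iff.mp γ.2
  set dl : C → ℤ := fun γ => Classical.choose (hdl γ) with hdldef
  have hdls : ∀ γ : C, w ^ (dl γ) = ↑γ := fun γ => Classical.choose_spec (hdl γ)
  set t : ℤ := Aw p w * Bw p w with ht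
  set fhat : C → ℚ := fun γ => ((-t * (dl γ)^2 + t * p * (dl γ) : ℤ) : ℚ) / (2*p)
    with hfhat
  have hp0 : (p:ℚ) ≠ 0 := by exact_mod_cast hp.ne_zero
  have h2p0 : (2*p:ℚ) ≠ 0 := by positivity
  -- integrality of ω − d f̂ on C
  have hTau : ∀ γ δ : C, ∃ m : ℤ,
      (m:ℚ) = omg p ↑γ ↑δ - (fhat δ - fhat (γ*δ) + fhat γ) := by
    intro γ δ
    set i := dl γ with hi'
    set j := dl δ with hj'
    set kk := dl (γ*δ) with hkk'
    have hi : w ^ i = ↑γ := hdls γ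
    have hj : w ^ j = ↑δ := hdls δ
    have hk : w ^ kk = (↑γ : Wg p) * ↑δ := hdls (γ*δ)
    have expand : omg p ↑γ ↑δ - (fhat δ - fhat (γ*δ) + fhat γ)
        = ((2*(Bw p ↑γ * Aw p ↑δ) + t*(i^2 + j^2 - kk^2) - t*p*(i+j-kk) : ℤ) : ℚ)
            / (2*p) := by
      rw [hfhat]
      unfold omg
      field_simp
      push_cast
      ring
    by_cases hw1 : w = 1
    · refine ⟨Bw p ↑γ * Aw p ↑δ, ?_⟩
      have hγ1 : (↑γ : Wg p) = 1 := by rw [← hi, hw1, one_zpow]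
      have hδ1 : (↑δ : Wg p) = 1 := by rw [← hj, hw1, one_zpow]
      have ht0 : t = 0 := by
        rw [ht, hw1]
        have : Aw p (1 : Wg p) = 0 := by
          unfold Aw
          have : (Multiplicative.toAdd (1 : Wg p)).1 = 0 := rfl
          rw [this, ZMod.val_zero]
          rfl
        rw [this, zero_mul]
      have hB0 : Bw p ↑γ = 0 := by
        rw [hγ1]
        unfold Bw
        have : (Multiplicative.toAdd (1 : Wg p)).2 = 0 := rfl
        rw [this, ZMod.val_zero]
        rfl
      rw [expand, ht0, hB0]
      push_cast
      ring
    · have hord : orderOf w = p := by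
        have hwp : w ^ p = 1 := by
          have h0 : Multiplicative.toAdd (w ^ p) = Multiplicative.toAdd (1 : Wg p) := by
            rw [toAdd_pow]
            have h1 : Multiplicative.toAdd (1 : Wg p) = 0 := rfl
            rw [h1]
            refine Prod.ext ?_ ?_
            · show p • (Multiplicative.toAdd w).1 = 0
              rw [nsmul_eq_mul]
              simp
            · show p • (Multiplicative.toAdd w).2 = 0
              rw [nsmul_eq_mul]
              simp
          exact Multiplicative.toAdd.injective h0
        exact orderOf_eq_prime hwp hw1
      have hdvd' : (p:ℤ) ∣ (i + j - kk) := by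
        have hzp : w ^ (i + j - kk) = 1 := by
          rw [zpow_sub, zpow_add, hi, hj, hk]
          group
        have := orderOf_dvd_iff_zpow_eq_one.mpr hzp
        rwa [hord] at this
      obtain ⟨e', he'⟩ := hdvd'
      have hd1 : (p:ℤ) ∣ (Bw p ↑γ * Aw p ↑δ - t * (i*j)) := by
        rw [← ZMod.intCast_zmod_eq_zero_iff_dvd]
        push_cast
        rw [castB, castA]
        have hγa : Multiplicative.toAdd (↑γ : Wg p) = i • Multiplicative.toAdd w := by
          rw [← hi, toAdd_zpow]
        have hδa : Multiplicative.toAdd (↑δ : Wg p) = j • Multiplicative.toAdd w := by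
          rw [← hj, toAdd_zpow]
        rw [hγa, hδa, ht]
        have hz1 : ((i • Multiplicative.toAdd w).2 : ZMod p)
            = (i : ZMod p) * (Multiplicative.toAdd w).2 := by
          show (i • (Multiplicative.toAdd w).2 : ZMod p) = _
          rw [zsmul_eq_mul]
        have hz2 : ((j • Multiplicative.toAdd w).1 : ZMod p)
            = (j : ZMod p) * (Multiplicative.toAdd w).1 := by
          show (j • (Multiplicative.toAdd w).1 : ZMod p) = _
          rw [zsmul_eq_mul]
        rw [hz1, hz2]
        push_cast
        rw [castA, castB]
        ring
      obtain ⟨d1, hd1'⟩ := hd1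
      have hev : Even (e' * (e' + 1)) := Int.even_mul_succ_self e'
      obtain ⟨d2, hd2''⟩ := hev
      have hd2''' : e' * (e' + 1) = 2 * d2 := by omega
      refine ⟨d1 + t * e' * (i + j) - t * p * d2, ?_⟩
      rw [expand]
      have hNZ : (2*(Bw p ↑γ * Aw p ↑δ) + t*(i^2 + j^2 - kk^2) - t*p*(i+j-kk) : ℤ)
          = 2*p*(d1 + t * e' * (i + j) - t * p * d2) := by
        have hkk2 : kk = i + j - p * e' := by omega
        rw [hkk2]
        linear_combination 2*hd1' - t*p^2*hd2'''
      rw [hNZ]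
      push_cast
      field_simp
  set tau : C → C → ℤ := fun γ δ => Classical.choose (hTau γ δ) with htaudef
  have htau : ∀ γ δ : C, ((tau γ δ : ℤ):ℚ)
      = omg p ↑γ ↑δ - (fhat δ - fhat (γ*δ) + fhat γ) :=
    fun γ δ => Classical.choose_spec (hTau γ δ)
  have hTD : ∀ γ δ ε : C,
      tau δ ε - tau (γ*δ) ε + tau γ (δ*ε) - tau γ δ = zInt p ↑γ ↑δ ↑ε := by
    intro γ δ ε
    have hcast : ((tau δ ε - tau (γ*δ) ε + tau γ (δ*ε) - tau γ δ : ℤ) : ℚ)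
        = ((zInt p ↑γ ↑δ ↑ε : ℤ) : ℚ) := by
      push_cast
      rw [htau, htau, htau, htau, hzQ]
      have hco1 : (↑(γ*δ) : Wg p) = ↑γ * ↑δ := rfl
      have hco2 : (↑(δ*ε) : Wg p) = ↑δ * ↑ε := rfl
      rw [hco1, hco2]
      simp only [mul_assoc]
      ring
    exact_mod_cast hcast
  -- contraction over the free action of C
  set fC : C →* Equiv.Perm (Fin n) := (phiW p n k E).comp C.subtype with hfC
  have hfreeC : ∀ (γ : C) x, fC γ x = x → γ = 1 := by
    intro γ x hx
    exact Subtype.ext (phiW_free p n k E ↑γ x hx)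
  set ν : C → C → Fin n → ℤ := fun γ δ x => muF p n k E ↑γ ↑δ x - tau γ δ with hν
  have hνco : ∀ γ δ ε (x : Fin n),
      ν δ ε ((fC γ)⁻¹ x) - ν (γ*δ) ε x + ν γ (δ*ε) x - ν γ δ x = 0 := by
    intro γ δ ε x
    have h1 := muF_d p n k E ↑γ ↑δ ↑ε x
    have h2 := hTD γ δ ε
    have hc1 : ((fC γ)⁻¹ x) = ((phiW p n k E ↑γ)⁻¹ x) := rfl
    have hco1 : ((γ*δ : C) : Wg p) = ↑γ * ↑δ := rfl
    have hco2 : ((δ*ε : C) : Wg p) = ↑δ * ↑ε := rfl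
    simp only [hν, hc1, hco1, hco2]
    omega
  obtain ⟨η, hη⟩ := free_contraction2 fC hfreeC ν hνco
  refine ⟨fun γ => mkMn n (η γ), fun γ δ => ?_⟩
  rw [Mn_smul_mk]
  have hR : mkMn n (fun x => η δ ((phiW p n k E ↑γ)⁻¹ x)) - mkMn n (η (γ*δ))
        + mkMn n (η γ)
      = mkMn n (fun x => η δ ((phiW p n k E ↑γ)⁻¹ x) - η (γ*δ) x + η γ x) := rfl
  rw [hR]
  apply Mn_mk_sub_mem (a := tau γ δ)
  intro x
  have h1 := hη γ δ x
  have hc1 : ((fC γ)⁻¹ x) = ((phiW p n k E ↑γ)⁻¹ x) := rfl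
  rw [hc1] at h1
  simp only [hν] at h1
  omega

lemma cPF_not_cob (hp : p.Prime) (hn : 0 < n) :
    ¬ ∃ b : Wg p → (GMod.Mn n).carrier,
      ∀ g h, cPF p n k E g h = phiW p n k E g • b h - b (g*h) + b g := by
  classical
  rintro ⟨b, hb⟩
  have hlift : ∀ g, ∃ v : Fin n → ℤ, mkMn n v = b g := fun g => mkMn_surjective n (b g)
  set btil : Wg p → Fin n → ℤ := fun g => Classical.choose (hlift g) with hbt
  have hbtil : ∀ g, mkMn n (btil g) = b g := fun g => Classical.choose_spec (hlift g)
  have hκex : ∀ g h : Wg p, ∃ a : ℤ, ∀ x : Fin n,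
      muF p n k E g h x
        - (btil h ((phiW p n k E g)⁻¹ x) - btil (g*h) x + btil g x) = a := by
    intro g h
    have h2 := hb g h
    rw [← hbtil g, ← hbtil h, ← hbtil (g*h), Mn_smul_mk] at h2
    have hR : mkMn n (fun x => btil h ((phiW p n k E g)⁻¹ x)) - mkMn n (btil (g*h))
          + mkMn n (btil g)
        = mkMn n (fun x => btil h ((phiW p n k E g)⁻¹ x) - btil (g*h) x + btil g x) := rfl
    rw [hR] at h2
    have h3 := QuotientAddGroup.eq_iff_sub_mem.mp h2.symm
    obtain ⟨a, ha⟩ := AddSubgroup.mem_zmultiples_iff.mp h3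
    refine ⟨-a, fun x => ?_⟩
    have h4 := congrFun ha x
    have h5 : (a • (fun (_ : Fin n) => (1:ℤ))) x = a := by
      rw [Pi.smul_apply]
      simp
    rw [h5] at h4
    have h6 : ((fun x => btil h ((phiW p n k E g)⁻¹ x) - btil (g*h) x + btil g x)
          - muF p n k E g h) x
        = (btil h ((phiW p n k E g)⁻¹ x) - btil (g*h) x + btil g x)
          - muF p n k E g h x := rfl
    rw [h6] at h4
    omega
  set κ : Wg p → Wg p → ℤ := fun g h => Classical.choose (hκex g h) with hκdef
  have hκs : ∀ (g h : Wg p) (x : Fin n),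
      muF p n k E g h x
        - (btil h ((phiW p n k E g)⁻¹ x) - btil (g*h) x + btil g x) = κ g h :=
    fun g h => Classical.choose_spec (hκex g h)
  -- dκ = z
  have hdκ : ∀ g h kk, κ h kk - κ (g*h) kk + κ g (h*kk) - κ g h = zInt p g h kk := by
    intro g h kk
    set x0 : Fin n := ⟨0, hn⟩
    set y0 : Fin n := (phiW p n k E g)⁻¹ x0 with hy0
    have h1 := muF_d p n k E g h kk x0
    have e1 := hκs h kk y0
    have e2 := hκs (g*h) kk x0
    have e3 := hκs g (h*kk) x0
    have e4 := hκs g h x0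
    have hD : btil kk ((phiW p n k E h)⁻¹ y0) = btil kk ((phiW p n k E (g*h))⁻¹ x0) := by
      have hperm : (phiW p n k E (g*h))⁻¹ = (phiW p n k E h)⁻¹ * (phiW p n k E g)⁻¹ := by
        rw [map_mul, mul_inv_rev]
      rw [hperm]
      rfl
    have hassoc : (g*h)*kk = g*(h*kk) := mul_assoc g h kk
    rw [← hy0] at h1 e3 e4
    rw [hD] at e1
    rw [hassoc] at e2
    omega
  -- averaging over the finite group W
  haveI : Fintype (Wg p) := by unfold Wg; infer_instance
  set NN := Fintype.card (Wg p) with hNN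
  have hNpos : 0 < NN := Fintype.card_pos
  set v : Wg p → Wg p → ℚ := fun g h => omg p g h - ((κ g h : ℤ) : ℚ) with hv
  have hdv : ∀ g h kk, v h kk - v (g*h) kk + v g (h*kk) - v g h = 0 := by
    intro g h kk
    have h1 : ((κ h kk : ℤ):ℚ) - ((κ (g*h) kk : ℤ):ℚ) + ((κ g (h*kk) : ℤ):ℚ)
        - ((κ g h : ℤ):ℚ) = ((zInt p g h kk : ℤ):ℚ) := by
      exact_mod_cast hdκ g h kk
    have h2 := hzQ p g h kk
    simp only [hv]
    linarith [h1, h2]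
  set Bs : Wg p → ℚ := fun g => ∑ h : Wg p, v g h with hBs
  have hsum : ∀ g h, Bs h - Bs (g*h) + Bs g - (NN:ℚ) * v g h = 0 := by
    intro g h
    have h1 : ∑ kk : Wg p, (v h kk - v (g*h) kk + v g (h*kk) - v g h) = 0 :=
      Finset.sum_eq_zero (fun kk _ => hdv g h kk)
    rw [Finset.sum_sub_distrib, Finset.sum_add_distrib, Finset.sum_sub_distrib] at h1
    have h2 : ∑ kk : Wg p, v g (h*kk) = Bs g := by
      rw [hBs]
      exact Fintype.sum_equiv (Equiv.mulLeft h) _ _ (fun kk => rfl)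
    have h3 : ∑ _kk : Wg p, v g h = (NN:ℚ) * v g h := by
      rw [Finset.sum_const, Finset.card_univ, ← hNN, nsmul_eq_mul]
    rw [h2, h3] at h1
    simp only [hBs] at h1 ⊢
    linarith [h1]
  set a : Wg p := Multiplicative.ofAdd ((0 : ZMod p), (1 : ZMod p)) with hadef
  set b' : Wg p := Multiplicative.ofAdd ((1 : ZMod p), (0 : ZMod p)) with hbdef
  have h1 := hsum a b'
  have h2 := hsum b' a
  have hcomm : b' * a = a * b' := mul_comm b' a
  rw [hcomm] at h2
  have hNN0 : (NN:ℚ) ≠ 0 := by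
    exact_mod_cast hNpos.ne'
  have hveq : v a b' = v b' a := by
    have : (NN:ℚ) * v a b' = (NN:ℚ) * v b' a := by linarith [h1, h2]
    exact mul_left_cancel₀ hNN0 this
  haveI : Fact (1 < p) := ⟨hp.one_lt⟩
  have hωab : omg p a b' = 1 / (p:ℚ) := by
    unfold omg Aw Bw
    have ha2 : (Multiplicative.toAdd a).2 = (1 : ZMod p) := rfl
    have hb1 : (Multiplicative.toAdd b').1 = (1 : ZMod p) := rfl
    rw [ha2, hb1, ZMod.val_one]
    norm_num
  have hωba : omg p b' a = 0 := by
    unfold omg Aw Bw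
    have hb2 : (Multiplicative.toAdd b').2 = (0 : ZMod p) := rfl
    rw [hb2, ZMod.val_zero]
    norm_num
  have hcontr : ((p:ℤ) * (κ b' a - κ a b') : ℚ) = -1 := by
    have hveq2 : omg p a b' - ((κ a b' : ℤ):ℚ) = omg p b' a - ((κ b' a : ℤ):ℚ) := hveq
    rw [hωab, hωba] at hveq2
    have hp0 : (p:ℚ) ≠ 0 := by exact_mod_cast hp.ne_zero
    have h6 := congrArg (fun q => (p:ℚ) * q) hveq2
    simp only [mul_sub, mul_zero] at h6
    rw [mul_one_div, div_self hp0] at h6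
    push_cast
    linarith [h6]
  have hcontr' : (p:ℤ) * (κ b' a - κ a b') = -1 := by exact_mod_cast hcontr
  have hdvd1 : (p:ℤ) ∣ 1 := by
    refine ⟨-(κ b' a - κ a b'), ?_⟩
    rw [mul_neg, hcontr']
    ring
  have : (p:ℤ) ≤ 1 := Int.le_of_dvd one_pos hdvd1
  have := hp.one_lt
  omega

end Geometry

end SSAux

/-- Corollary (Saltman, Snider): if `n > 1` is divisible by a square `m² > 1`,
then for every flasque resolution `0 → M_n → S → N → 0` of `ℤ[S_n]`-lattices
the cokernel `N` is not stably permutation (the generic norm-one torus `T_n`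
is not stably rational). -/
theorem saltman_snider (n m : ℕ) (hn : 1 < n) (hm : 1 < m) (hdvd : m ^ 2 ∣ n)
    (S N : GMod (Equiv.Perm (Fin n)))
    (h : IsFlasqueResolution (Mn n) S N) :
    ¬ N.IsStablyPermutation := by
  classical
  rintro ⟨P, Q, hPperm, hQperm, e, he⟩
  obtain ⟨_, _, _, hSperm, _, i, pr, hiEq, hprEq, hiInj, hprSurj, hker⟩ := h
  -- choose a prime p with p² ∣ n
  obtain ⟨p, hp, hpm⟩ := Nat.exists_prime_and_dvd (by omega : m ≠ 1)
  have hp2n : p ^ 2 ∣ n := dvd_trans (pow_dvd_pow_of_dvd hpm 2) hdvd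
  set k := n / p ^ 2 with hkdef
  have hkn : n = p ^ 2 * k := (Nat.mul_div_cancel' hp2n).symm
  haveI : NeZero p := ⟨hp.ne_zero⟩
  haveI : Fintype (SSAux.Wg p) := by unfold SSAux.Wg; infer_instance
  have hcard : Fintype.card (Fin n) = Fintype.card ((SSAux.Wg p) × Fin k) := by
    rw [Fintype.card_fin, Fintype.card_prod, Fintype.card_fin]
    have h1 : Fintype.card (SSAux.Wg p) = p * p := by
      calc Fintype.card (SSAux.Wg p)
          = Fintype.card (ZMod p × ZMod p) := Fintype.card_congr Multiplicative.toAdd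
        _ = p * p := by rw [Fintype.card_prod, ZMod.card]
    rw [h1, hkn]
    ring
  set E := Fintype.equivOfCardEq hcard with hE
  set φ := SSAux.phiW p n k E with hφ
  set c := SSAux.cPF p n k E with hc
  -- the chase modules and maps
  set T := S.prod P with hT
  have hTperm : T.IsPermutation := SSAux.perm_prod hSperm hPperm
  set j : (Mn n).carrier → T.carrier := fun mm => ((i mm, 0) : S.carrier × P.carrier)
    with hj
  set q : T.carrier → Q.carrier := fun sp => e (pr sp.1, sp.2) with hq
  have hTsmul : ∀ (σ : Equiv.Perm (Fin n)) (x : S.carrier) (y : P.carrier),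
      σ • ((x, y) : T.carrier) = (σ • x, σ • y) := fun _ _ _ => rfl
  have hNPsmul : ∀ (σ : Equiv.Perm (Fin n)) (x : N.carrier) (y : P.carrier),
      σ • ((x, y) : (N.prod P).carrier) = (σ • x, σ • y) := fun _ _ _ => rfl
  have hjadd : ∀ a b, j (a + b) = j a + j b := by
    intro a b
    rw [hj]
    simp only [map_add]
    show ((i a + i b, (0:P.carrier)) : S.carrier × P.carrier) = (i a, 0) + (i b, 0)
    exact Prod.ext rfl (add_zero (0:P.carrier)).symm
  have hjsub : ∀ a b, j (a - b) = j a - j b := by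
    intro a b
    rw [hj]
    simp only [map_sub]
    show ((i a - i b, (0:P.carrier)) : S.carrier × P.carrier) = (i a, 0) - (i b, 0)
    exact Prod.ext rfl (sub_zero (0:P.carrier)).symm
  have hjsmul : ∀ (σ : Equiv.Perm (Fin n)) a, j (σ • a) = σ • j a := by
    intro σ a
    show ((i (σ • a), (0:P.carrier)) : S.carrier × P.carrier)
        = σ • ((i a, 0) : S.carrier × P.carrier)
    rw [hTsmul σ (i a) 0, hiEq σ a, smul_zero]
  have hjinj : Function.Injective j := by
    intro a b hab
    rw [hj] at hab
    simp only at hab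
    have h1 := congrArg (Prod.fst : S.carrier × P.carrier → S.carrier) hab
    exact hiInj h1
  have hqadd : ∀ u v, q (u + v) = q u + q v := by
    intro u v
    rw [hq]
    simp only
    have h1 : ((u + v : T.carrier)).1 = u.1 + v.1 := rfl
    have h2 : ((u + v : T.carrier)).2 = u.2 + v.2 := rfl
    rw [h1, h2]
    exact (congrArg e (Prod.ext (map_add pr u.1 v.1) rfl :
      ((pr (u.1 + v.1), u.2 + v.2) : (N.prod P).carrier) = (pr u.1, u.2) + (pr v.1, v.2))).trans
      (map_add e _ _)
  have hqsub : ∀ u v, q (u - v) = q u - q v := by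
    intro u v
    rw [hq]
    simp only
    have h1 : ((u - v : T.carrier)).1 = u.1 - v.1 := rfl
    have h2 : ((u - v : T.carrier)).2 = u.2 - v.2 := rfl
    rw [h1, h2]
    exact (congrArg e (Prod.ext (map_sub pr u.1 v.1) rfl :
      ((pr (u.1 - v.1), u.2 - v.2) : (N.prod P).carrier) = (pr u.1, u.2) - (pr v.1, v.2))).trans
      (map_sub e _ _)
  have hqsmul : ∀ (σ : Equiv.Perm (Fin n)) u, q (σ • u) = σ • q u := by
    intro σ u
    rw [hq]
    simp only
    have h1 : ((σ • u : T.carrier)).1 = σ • u.1 := rfl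
    have h2 : ((σ • u : T.carrier)).2 = σ • u.2 := rfl
    rw [h1, h2, ← he σ (pr u.1, u.2)]
    congr 1
    exact Prod.ext (hprEq σ u.1) rfl
  have hqj : ∀ mm, q (j mm) = 0 := by
    intro mm
    rw [hj, hq]
    simp only
    have h1 : pr (i mm) = 0 := by
      have : i mm ∈ pr.ker := by
        rw [← hker]
        exact ⟨mm, rfl⟩
      exact this
    rw [h1]
    show e (0 : (N.prod P).carrier) = 0
    exact map_zero e
  have hqsurj : Function.Surjective q := by
    intro qq
    obtain ⟨s, hs⟩ := hprSurj (e.symm qq).1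
    refine ⟨((s, (e.symm qq).2) : S.carrier × P.carrier), ?_⟩
    rw [hq]
    simp only
    rw [hs]
    have : ((e.symm qq).1, (e.symm qq).2) = e.symm qq := rfl
    rw [this, AddEquiv.apply_symm_apply]
  have hqker : ∀ u, q u = 0 → ∃ mm, j mm = u := by
    intro u hu
    simp only [hq] at hu
    have h0 : e (pr u.1, u.2) = e 0 := by rw [hu, map_zero]
    have h1 : ((pr u.1, u.2) : N.carrier × P.carrier) = 0 := e.injective h0
    have h2 : pr u.1 = 0 := congrArg Prod.fst h1
    have h3 : u.2 = 0 := congrArg Prod.snd h1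
    have h4 : u.1 ∈ pr.ker := h2
    rw [← hker] at h4
    obtain ⟨mm, hmm⟩ := h4
    refine ⟨mm, ?_⟩
    show ((i mm, (0:P.carrier)) : S.carrier × P.carrier) = u
    rw [hmm, ← h3]
    rfl
  -- the pushed-forward cocycle
  set jc : SSAux.Wg p → SSAux.Wg p → T.carrier := fun g h => j (c g h) with hjc
  have hjcco : ∀ g h kk, φ g • jc h kk + jc g (h*kk) = jc (g*h) kk + jc g h := by
    intro g h kk
    have h1 := SSAux.cPF_cocycle p n k E g h kk
    have h2 := congrArg j h1
    rw [hjadd, hjadd, hjsmul] at h2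
    exact h2
  have hjccyc : ∀ w : SSAux.Wg p, ∃ β : Subgroup.zpowers w → T.carrier,
      ∀ γ δ : Subgroup.zpowers w, jc ↑γ ↑δ = φ ↑γ • β δ - β (γ*δ) + β γ := by
    intro w
    obtain ⟨β, hβ⟩ := SSAux.cPF_cyc p n k E hp w
    refine ⟨fun γ => j (β γ), fun γ δ => ?_⟩
    have h2 := congrArg j (hβ γ δ)
    rw [hjadd, hjsub, hjsmul] at h2
    exact h2
  obtain ⟨b, hb⟩ := SSAux.perm_sha2_abstract hTperm φ jc hjcco hjccyc
  -- the induced 1-cocycle in Q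
  set qb : SSAux.Wg p → Q.carrier := fun g => q (b g) with hqb
  have hqbco : ∀ g h, qb (g*h) = φ g • qb h + qb g := by
    intro g h
    have h1 := congrArg q (hb g h)
    rw [hqj, hqadd, hqsub, hqsmul] at h1
    show q (b (g*h)) = φ g • q (b h) + q (b g)
    have h6 : q (b (g*h)) - (φ g • q (b h) + q (b g))
        = -(φ g • q (b h) - q (b (g*h)) + q (b g)) := by abel
    have h7 : q (b (g*h)) - (φ g • q (b h) + q (b g)) = 0 := by
      rw [h6, ← h1, neg_zero]
    exact sub_eq_zero.mp h7
  obtain ⟨z, hz⟩ := SSAux.perm_h1_abstract hQperm φ qb hqbco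
  obtain ⟨t, htz⟩ := hqsurj z
  -- correct b to land in the image of j
  have hb' : ∀ g, ∃ mm, j mm = b g - (φ g • t - t) := by
    intro g
    apply hqker
    rw [hqsub, hqsub, hqsmul, htz]
    have h7 : q (b g) = qb g := rfl
    rw [h7, hz g]
    abel
  set βm : SSAux.Wg p → (Mn n).carrier := fun g => Classical.choose (hb' g) with hβm
  have hβms : ∀ g, j (βm g) = b g - (φ g • t - t) := fun g => Classical.choose_spec (hb' g)
  -- final contradiction with cPF_not_cob
  apply SSAux.cPF_not_cob p n k E hp (by omega : 0 < n)
  refine ⟨βm, fun g h => ?_⟩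
  apply hjinj
  have hR : j (φ g • βm h - βm (g*h) + βm g)
      = φ g • j (βm h) - j (βm (g*h)) + j (βm g) := by
    rw [hjadd, hjsub, hjsmul]
  rw [hR, hβms, hβms, hβms]
  have hmulsmul : φ g • (φ h • t) = φ (g*h) • t := by
    rw [map_mul, mul_smul]
  have hexp : φ g • (b h - (φ h • t - t)) = φ g • b h - (φ (g*h) • t - φ g • t) := by
    rw [smul_sub, smul_sub, hmulsmul]
  rw [hexp]
  have hfin : φ g • b h - (φ (g*h) • t - φ g • t) - (b (g*h) - (φ (g*h) • t - t))
        + (b g - (φ g • t - t))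
      = (φ g • b h - b (g*h) + b g) := by
    abel
  rw [hfin, ← hb g h]
end
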